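/- arXiv:cs/0507068 — 11 statements merged into one kernel-verified Lean document; each statement's English description precedes it below -/
import Mathlib

section
/- A set A ⊆ F_2^r is generic (r,m)-erasure reducing if and only if for every binary r×m matrix M of rank m there exists a vector a ∈ A such that the vector aM has Hamming weight exactly 1. -/
open Matrix

/-- Hamming weight of a binary vector. -/
def wt {n : ℕ} (v : Fin n → ZMod 2) : ℕ :=
  (Finset.univ.filter (fun j => v j ≠ 0)).card

/-- Weight of a vector restricted to a set of coordinates. -/
def wtOn {n : ℕ} (v : Fin n → ZMod 2) (E : Finset (Fin n)) : ℕ :=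
  (E.filter (fun j => v j ≠ 0)).card

/-- `A` is a generic `(r,m)`-erasure reducing set (original, code-based definition):
for every `n ≥ r` and every full-rank `r × n` parity check matrix `H`, and every
correctable erasure set `E` of size `m` of the code `{c | H c = 0}`, some `a ∈ A`
gives a parity check `aH` of weight one on `E`. -/
def GenRedCodes (r m : ℕ) (A : Set (Fin r → ZMod 2)) : Prop :=
  ∀ n : ℕ, r ≤ n → ∀ H : Matrix (Fin r) (Fin n) (ZMod 2), H.rank = r →
    ∀ E : Finset (Fin n), E.card = m →
      (¬ ∃ c : Fin n → ZMod 2, c ≠ 0 ∧ H.mulVec c = 0 ∧ ∀ j, c j ≠ 0 → j ∈ E) →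
      ∃ a ∈ A, wtOn (Matrix.vecMul a H) E = 1

lemma rank_eq_iff_inj {r m : ℕ} (M : Matrix (Fin r) (Fin m) (ZMod 2)) :
    M.rank = m ↔ Function.Injective M.mulVecLin := by
  rw [← LinearMap.ker_eq_bot]
  have h2 := LinearMap.finrank_range_add_finrank_ker M.mulVecLin
  rw [Module.finrank_fin_fun] at h2
  rw [Matrix.rank]
  constructor
  · intro h
    have : Module.finrank (ZMod 2) (LinearMap.ker M.mulVecLin) = 0 := by omega
    exact Submodule.finrank_eq_zero.mp this
  · intro h
    rw [h] at h2
    simpa using h2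

lemma rank_eq_of_surj {r n : ℕ} (H : Matrix (Fin r) (Fin n) (ZMod 2))
    (h : Function.Surjective H.mulVecLin) : H.rank = r := by
  rw [Matrix.rank, LinearMap.range_eq_top.mpr h, finrank_top, Module.finrank_fin_fun]

lemma wtOn_image {n m : ℕ} (v : Fin n → ZMod 2) (f : Fin m → Fin n)
    (hf : Function.Injective f) :
    wtOn v (Finset.univ.image f) = wt (fun i => v (f i)) := by
  unfold wtOn wt
  rw [Finset.filter_image, Finset.card_image_of_injective _ hf]

theorem stmt_1 (r m : ℕ) (hm1 : 1 ≤ m) (hmr : m ≤ r) (A : Set (Fin r → ZMod 2)) :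
    GenRedCodes r m A ↔
      ∀ M : Matrix (Fin r) (Fin m) (ZMod 2), M.rank = m →
        ∃ a ∈ A, wt (Matrix.vecMul a M) = 1 := by
  constructor
  · -- forward: GenRedCodes → matrix condition
    intro hG M hM
    have hMinj : Function.Injective M.mulVecLin := (rank_eq_iff_inj M).mp hM
    set e : Fin r ⊕ Fin m ≃ Fin (r + m) := finSumFinEquiv with he
    set H : Matrix (Fin r) (Fin (r + m)) (ZMod 2) :=
      (fromCols 1 M).submatrix (Equiv.refl (Fin r)) e.symm with hH
    -- rank of H is r
    have hsurj : Function.Surjective H.mulVecLin := by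
      intro v
      refine ⟨(Sum.elim v 0) ∘ e.symm, ?_⟩
      rw [Matrix.mulVecLin_apply, hH, Matrix.submatrix_mulVec_equiv]
      have : ((Sum.elim v (0 : Fin m → ZMod 2)) ∘ ⇑e.symm) ∘ ⇑e.symm.symm
          = Sum.elim v 0 := by
        ext x; simp
      rw [this, fromCols_mulVec_sumElim]
      simp
    have hrank : H.rank = r := rank_eq_of_surj H hsurj
    -- erasure set
    set f : Fin m → Fin (r + m) := fun i => e (Sum.inr i) with hf
    have hfinj : Function.Injective f := fun i j hij => by
      simpa using e.injective hij
    set E : Finset (Fin (r + m)) := Finset.univ.image f with hE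
    have hEcard : E.card = m := by
      rw [hE, Finset.card_image_of_injective _ hfinj, Finset.card_univ, Fintype.card_fin]
    -- correctability
    have hcorr : ¬ ∃ c : Fin (r + m) → ZMod 2, c ≠ 0 ∧ H.mulVec c = 0 ∧
        ∀ j, c j ≠ 0 → j ∈ E := by
      rintro ⟨c, hc0, hcH, hcE⟩
      set d : Fin m → ZMod 2 := fun i => c (e (Sum.inr i)) with hd
      have hce : c ∘ e = Sum.elim (0 : Fin r → ZMod 2) d := by
        funext x
        cases x with
        | inl i =>
          by_contra hne
          have := hcE _ (by simpa using hne)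
          rw [hE, Finset.mem_image] at this
          obtain ⟨j, _, hj⟩ := this
          have := e.injective hj
          simp at this
        | inr i => rfl
      have hmv : M.mulVec d = 0 := by
        have : H.mulVec c = M.mulVec d := by
          rw [hH, Matrix.submatrix_mulVec_equiv]
          have h1 : c ∘ ⇑e.symm.symm = Sum.elim (0 : Fin r → ZMod 2) d := by
            simpa using hce
          rw [h1, fromCols_mulVec_sumElim]
          simp
        rw [← this, hcH]
      have hd0 : d = 0 := by
        apply hMinj
        simpa [Matrix.mulVecLin_apply] using hmv
      apply hc0
      funext j
      have : c (e (e.symm j)) = Sum.elim (0 : Fin r → ZMod 2) d (e.symm j) :=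
        congrFun hce (e.symm j)
      rw [Equiv.apply_symm_apply] at this
      rw [this, hd0]
      cases e.symm j <;> simp
    obtain ⟨a, haA, hwt⟩ := hG (r + m) (by omega) H hrank E hEcard hcorr
    refine ⟨a, haA, ?_⟩
    rw [hE, wtOn_image _ _ hfinj] at hwt
    have hval : (fun i => Matrix.vecMul a H (f i)) = Matrix.vecMul a M := by
      funext i
      rw [hH, Matrix.submatrix_vecMul_equiv]
      simp [hf, Matrix.vecMul_fromCols]
    rwa [hval] at hwt
  · -- backward: matrix condition → GenRedCodes
    intro hA n hn H hH E hE hcorr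
    set g : Fin m ≃ {x // x ∈ E} := (E.equivFin.trans (finCongr hE)).symm with hg
    set f : Fin m → Fin n := fun i => (g i : Fin n) with hf
    have hfinj : Function.Injective f := fun i j hij => g.injective (Subtype.ext hij)
    have hfE : ∀ i, f i ∈ E := fun i => (g i).2
    set M : Matrix (Fin r) (Fin m) (ZMod 2) := H.submatrix id f with hM
    have hEim : E = Finset.univ.image f := by
      apply Finset.eq_of_subset_of_card_le
      · intro x hx
        rw [Finset.mem_image]
        exact ⟨g.symm ⟨x, hx⟩, Finset.mem_univ _, by simp [hf]⟩
      · rw [Finset.card_image_of_injective _ hfinj, Finset.card_univ, Fintype.card_fin, hE]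
    -- M has rank m
    have hMinj : Function.Injective M.mulVecLin := by
      rw [← LinearMap.ker_eq_bot, Submodule.eq_bot_iff]
      intro d hdker
      have hmv : M.mulVec d = 0 := by simpa [Matrix.mulVecLin_apply] using hdker
      classical
      set c : Fin n → ZMod 2 := fun j => if h : j ∈ E then d (g.symm ⟨j, h⟩) else 0 with hc
      have hck : ∀ k, c (f k) = d k := by
        intro k
        have h1 : c (f k) = d (g.symm ⟨f k, hfE k⟩) := dif_pos (hfE k)
        rw [h1]
        congr 1
        have h2 : (⟨f k, hfE k⟩ : {x // x ∈ E}) = g k := Subtype.ext rfl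
        rw [h2, Equiv.symm_apply_apply]
      have hcsupp : ∀ j, c j ≠ 0 → j ∈ E := by
        intro j hj
        by_contra hne
        apply hj
        simp [hc, hne]
      have hHc : H.mulVec c = 0 := by
        funext i
        have key : (H.mulVec c) i = (M.mulVec d) i := by
          simp only [Matrix.mulVec, dotProduct]
          calc ∑ j : Fin n, H i j * c j
              = ∑ j ∈ E, H i j * c j := by
                refine (Finset.sum_subset (Finset.subset_univ E) ?_).symm
                intro j _ hj
                have : c j = 0 := by
                  by_contra hne
                  exact hj (hcsupp j hne)
                rw [this, mul_zero]
            _ = ∑ k : Fin m, H i (f k) * c (f k) := by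
                rw [hEim]
                exact Finset.sum_image (fun x _ y _ h => hfinj h)
            _ = ∑ k : Fin m, M i k * d k := by
                apply Finset.sum_congr rfl
                intro k _
                rw [hck k, hM]
                rfl
        rw [key, hmv]
      have hc0 : c = 0 := by
        by_contra hne
        exact hcorr ⟨c, hne, hHc, hcsupp⟩
      funext k
      rw [← hck k, hc0]
      rfl
    have hMr : M.rank = m := (rank_eq_iff_inj M).mpr hMinj
    obtain ⟨a, haA, hwt⟩ := hA M hMr
    refine ⟨a, haA, ?_⟩
    rw [hEim, wtOn_image _ _ hfinj]
    have hval : (fun i => Matrix.vecMul a H (f i)) = Matrix.vecMul a M := by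
      funext i
      rw [hM]
      have : H.submatrix id f = H.submatrix (⇑(Equiv.refl (Fin r))) f := by
        simp
      rw [this, Matrix.submatrix_vecMul_equiv]
      simp
    rwa [hval]
end

section
/- Let 2 ≤ m ≤ r. If A ⊆ F_2^r is a generic (r,m)-erasure reducing set, then A is also a generic (r,m−1)-erasure reducing set. -/
open Matrix

/-- `A` is a generic `(r,m)`-erasure reducing set. -/
def GenRed (r m : ℕ) (A : Set (Fin r → ZMod 2)) : Prop :=
  ∀ M : Matrix (Fin r) (Fin m) (ZMod 2), M.rank = m →
    ∃ a ∈ A, wt (Matrix.vecMul a M) = 1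

/-- `A` is a generic `(r,m)`-erasure correcting set. -/
def GenCor (r m : ℕ) (A : Set (Fin r → ZMod 2)) : Prop :=
  ∀ m', 1 ≤ m' → m' ≤ m → GenRed r m' A

lemma wt_eq_one_iff {n : ℕ} (v : Fin n → ZMod 2) :
    wt v = 1 ↔ ∃ i, v i ≠ 0 ∧ ∀ j, j ≠ i → v j = 0 := by
  unfold wt
  rw [Finset.card_eq_one]
  constructor
  · rintro ⟨i, hi⟩
    refine ⟨i, ?_, fun j hj => ?_⟩
    · have : i ∈ Finset.univ.filter (fun j => v j ≠ 0) := hi ▸ Finset.mem_singleton_self i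
      exact (Finset.mem_filter.1 this).2
    · by_contra h
      have : j ∈ Finset.univ.filter (fun j => v j ≠ 0) := Finset.mem_filter.2 ⟨Finset.mem_univ _, h⟩
      rw [hi, Finset.mem_singleton] at this
      exact hj this
  · rintro ⟨i, hi, h⟩
    refine ⟨i, ?_⟩
    ext j
    simp only [Finset.mem_filter, Finset.mem_univ, true_and, Finset.mem_singleton]
    constructor
    · intro hj; by_contra hji; exact hj (h j hji)
    · rintro rfl; exact hi

lemma ker_eq_bot_of_rank {r s : ℕ} (M : Matrix (Fin r) (Fin s) (ZMod 2)) (h : M.rank = s) :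
    LinearMap.ker M.mulVecLin = ⊥ := by
  have h1 := LinearMap.finrank_range_add_finrank_ker M.mulVecLin
  rw [Module.finrank_fin_fun] at h1
  rw [Matrix.rank] at h
  rw [h] at h1
  have : Module.finrank (ZMod 2) (LinearMap.ker M.mulVecLin) = 0 := by omega
  exact Submodule.finrank_eq_zero.1 this

lemma rank_of_ker_eq_bot {r s : ℕ} (M : Matrix (Fin r) (Fin s) (ZMod 2))
    (h : LinearMap.ker M.mulVecLin = ⊥) : M.rank = s := by
  have h1 := LinearMap.finrank_range_add_finrank_ker M.mulVecLin
  rw [Module.finrank_fin_fun, h, finrank_bot] at h1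
  rw [Matrix.rank]
  omega

theorem stmt_3 (r m : ℕ) (hm : 2 ≤ m) (hr : m ≤ r) (A : Set (Fin r → ZMod 2))
    (hA : GenRed r m A) : GenRed r (m - 1) A := by
  obtain ⟨n, rfl⟩ : ∃ n, m = n + 2 := ⟨m - 2, by omega⟩
  show GenRed r (n + 1) A
  intro M' hM'
  -- column space of M' is proper
  have hker : LinearMap.ker M'.mulVecLin = ⊥ := ker_eq_bot_of_rank M' hM'
  have hlt : LinearMap.range M'.mulVecLin ≠ ⊤ := by
    intro htop
    have h1 := LinearMap.finrank_range_add_finrank_ker M'.mulVecLin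
    rw [Module.finrank_fin_fun, htop, hker, finrank_bot, finrank_top,
      Module.finrank_fin_fun] at h1
    omega
  obtain ⟨v, hv⟩ : ∃ v, v ∉ LinearMap.range M'.mulVecLin := by
    by_contra h
    push_neg at h
    exact hlt (Submodule.eq_top_iff'.2 h)
  -- build the rank n+2 matrix
  set N : Matrix (Fin r) (Fin (n + 2)) (ZMod 2) :=
    Matrix.of fun i j => Fin.cases (v i) (fun k => M' i k + if k = 0 then v i else 0) j with hN
  have hNrank : N.rank = n + 2 := by
    apply rank_of_ker_eq_bot
    rw [LinearMap.ker_eq_bot']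
    intro x hx
    have hx' : N.mulVec x = 0 := hx
    have key : ∀ i, (x 0 + x 1) * v i + M'.mulVec (fun k => x k.succ) i = 0 := by
      intro i
      have := congrFun hx' i
      simp only [Pi.zero_apply] at this
      rw [Matrix.mulVec, dotProduct, Fin.sum_univ_succ] at this
      simp only [hN, Matrix.of_apply, Fin.cases_zero, Fin.cases_succ] at this
      rw [Finset.sum_congr rfl (fun k _ => by split <;> ring :
        ∀ k ∈ Finset.univ, (M' i k + if k = 0 then v i else 0) * x k.succ
          = M' i k * x k.succ + (if k = 0 then v i * x k.succ else 0))] at this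
      rw [Finset.sum_add_distrib, Finset.sum_ite_eq' Finset.univ (0 : Fin (n+1))
        (fun k => v i * x k.succ)] at this
      simp only [Finset.mem_univ, if_true] at this
      rw [Matrix.mulVec, dotProduct]
      calc (x 0 + x 1) * v i + ∑ k, M' i k * x k.succ
          = v i * x 0 + (∑ k, M' i k * x k.succ + v i * x (0 : Fin (n+1)).succ) := by
            have : ((0 : Fin (n+1)).succ : Fin (n+2)) = 1 := rfl
            rw [this]; ring
        _ = 0 := this
    have hvec : M'.mulVec (fun k => x k.succ) = (x 0 + x 1) • v := by
      funext i
      have hk := key i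
      have htwo : (2 : ZMod 2) = 0 := by decide
      simp only [Pi.smul_apply, smul_eq_mul]
      linear_combination hk + (-(x 0 + x 1) * v i) * htwo
    have hx01 : x 0 + x 1 = 0 := by
      by_contra h01
      have h01' : x 0 + x 1 = 1 := by
        have hz : ∀ z : ZMod 2, z ≠ 0 → z = 1 := by decide
        exact hz _ h01
      apply hv
      refine ⟨fun (k : Fin (n+1)) => x k.succ, ?_⟩
      rw [Matrix.mulVecLin_apply, hvec, h01', one_smul]
    have hker' : (fun (k : Fin (n+1)) => x k.succ) = 0 := by
      have h3 : M'.mulVec (fun (k : Fin (n+1)) => x k.succ) = 0 := by rw [hvec, hx01, zero_smul]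
      exact LinearMap.ker_eq_bot'.1 hker (fun (k : Fin (n+1)) => x k.succ) h3
    funext j
    refine Fin.cases ?_ ?_ j
    · have h1 : x (0 : Fin (n+1)).succ = 0 := congrFun hker' 0
      have : ((0 : Fin (n+1)).succ : Fin (n+2)) = 1 := rfl
      rw [this] at h1
      have := hx01
      rw [h1, add_zero] at this
      exact this
    · intro k
      exact congrFun hker' k
  obtain ⟨a, haA, ha⟩ := hA N hNrank
  refine ⟨a, haA, ?_⟩
  rw [wt_eq_one_iff] at ha ⊢
  obtain ⟨i, hi, hother⟩ := ha
  -- relation between vecMul a M' and vecMul a N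
  have hw0 : Matrix.vecMul a N 0 = a ⬝ᵥ v := by
    rw [Matrix.vecMul, dotProduct, dotProduct]
    simp [hN]
  have hwsucc : ∀ k : Fin (n+1), Matrix.vecMul a N k.succ
      = Matrix.vecMul a M' k + if k = 0 then a ⬝ᵥ v else 0 := by
    intro k
    rw [Matrix.vecMul, dotProduct, Matrix.vecMul, dotProduct, dotProduct]
    simp only [hN, Matrix.of_apply, Fin.cases_succ]
    rw [Finset.sum_congr rfl (fun i _ => by split <;> ring :
      ∀ i ∈ Finset.univ, a i * (M' i k + if k = 0 then v i else 0)
        = a i * M' i k + (if k = 0 then a i * v i else 0))]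
    rw [Finset.sum_add_distrib]
    congr 1
    split
    · simp
    · simp
  refine Fin.cases ?_ ?_ i hi hother
  · -- i = 0 : a ⬝ᵥ v ≠ 0, all succ entries of aN are 0
    intro hi0 hoth
    refine ⟨0, ?_, ?_⟩
    · have h1 := hwsucc 0
      rw [hoth (0 : Fin (n+1)).succ (by simp [Fin.succ_ne_zero])] at h1
      simp only [if_pos rfl] at h1
      rw [hw0] at hi0
      intro hc
      rw [hc, zero_add] at h1
      exact hi0 h1.symm
    · intro j hj
      have h1 := hwsucc j
      rw [hoth j.succ (by simp [Fin.succ_ne_zero])] at h1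
      rw [if_neg hj] at h1
      rw [add_zero] at h1
      exact h1.symm
  · -- i = k.succ
    intro k hik hoth
    have hw0' : Matrix.vecMul a N 0 = 0 := hoth 0 (Ne.symm (Fin.succ_ne_zero k))
    refine ⟨k, ?_, ?_⟩
    · have h1 := hwsucc k
      rw [hw0] at hw0'
      rw [hw0'] at h1
      simp only [ite_self, add_zero] at h1
      rw [h1] at hik
      exact hik
    · intro j hj
      have h1 := hwsucc j
      rw [hoth j.succ (by simpa using hj)] at h1
      rw [hw0] at hw0'
      rw [hw0'] at h1
      simp only [ite_self, add_zero] at h1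
      exact h1.symm
end

section
/- Let C be the binary [5,1,5] repetition code and let 𝓗 = {10001, 01100, 01111, 01010} ⊆ F_2^5. Then 𝓗 is 4-erasure reducing for C but not 4-erasure correcting for C; in particular {2,3,4} is a stopping set for 𝓗 that contains no support of a nonzero codeword of C. -/
open Matrix

/-- The binary `[5,1,5]` repetition code. -/
def RepCode : Set (Fin 5 → ZMod 2) := {0, fun _ => 1}

/-- `E` is correctable for the repetition code: it contains the support of no
nonzero codeword. -/
def RepCorrectable (E : Finset (Fin 5)) : Prop :=
  ¬ ∃ c ∈ RepCode, c ≠ 0 ∧ ∀ j, c j ≠ 0 → j ∈ E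

/-- `E` is a stopping set for `𝓗`. -/
def IsStoppingSet (𝓗 : Set (Fin 5 → ZMod 2)) (E : Finset (Fin 5)) : Prop :=
  ∀ h ∈ 𝓗, wtOn h E ≠ 1

/-- `𝓗` is `m`-erasure reducing for the repetition code. -/
def RepReducing (𝓗 : Set (Fin 5 → ZMod 2)) (m : ℕ) : Prop :=
  ∀ E : Finset (Fin 5), E.card = m → RepCorrectable E → ¬ IsStoppingSet 𝓗 E


lemma key_red : ∀ E : Finset (Fin 5), E.card = 4 →
    wtOn ![1, 0, 0, 0, 1] E = 1 ∨ wtOn ![0, 1, 1, 0, 0] E = 1 ∨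
    wtOn ![0, 1, 1, 1, 1] E = 1 ∨ wtOn ![0, 1, 0, 1, 0] E = 1 := by decide

lemma corr123 : RepCorrectable ({1, 2, 3} : Finset (Fin 5)) := by
  rintro ⟨c, hc, hne, hsupp⟩
  rcases hc with rfl | rfl
  · exact hne rfl
  · exact absurd (hsupp 0 (by decide)) (by decide)

theorem stmt_5 :
    let 𝓗 : Set (Fin 5 → ZMod 2) :=
      {![1, 0, 0, 0, 1], ![0, 1, 1, 0, 0], ![0, 1, 1, 1, 1], ![0, 1, 0, 1, 0]}
    RepReducing 𝓗 4 ∧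
    ¬ (∀ m', 1 ≤ m' → m' ≤ 4 → RepReducing 𝓗 m') ∧
    IsStoppingSet 𝓗 ({1, 2, 3} : Finset (Fin 5)) ∧
    RepCorrectable ({1, 2, 3} : Finset (Fin 5)) := by
  intro 𝓗
  have hstop123 : IsStoppingSet 𝓗 ({1, 2, 3} : Finset (Fin 5)) := by
    intro h hh
    rcases hh with rfl | rfl | rfl | rfl <;> decide
  refine ⟨?_, ?_, hstop123, corr123⟩
  · intro E hcard _ hstop
    rcases key_red E hcard with h | h | h | h
    · exact hstop _ (by left; rfl) h
    · exact hstop _ (by right; left; rfl) h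
    · exact hstop _ (by right; right; left; rfl) h
    · exact hstop _ (by right; right; right; rfl) h
  · intro hall
    exact hall 3 (by norm_num) (by norm_num) {1, 2, 3} (by decide) corr123 hstop123
end

section
/- For all 1 ≤ m ≤ r, every generic (r,m)-erasure reducing set A ⊆ F_2^r spans F_2^r; consequently |A| ≥ r. -/
open Matrix

theorem cast_wt_eq_sum {n : ℕ} (v : Fin n → ZMod 2) : (wt v : ZMod 2) = ∑ j, v j := by
  have hone : ∀ x : ZMod 2, x ≠ 0 → x = 1 := by decide
  rw [wt, Finset.card_eq_sum_ones, Nat.cast_sum, Finset.sum_filter]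
  refine Finset.sum_congr rfl fun j _ => ?_
  by_cases hj : v j = 0
  · simp [hj]
  · simp [hone _ hj]

section DivisionRing

variable {K V W : Type*} [DivisionRing K] [AddCommGroup V] [Module K V] [AddCommGroup W]
  [Module K W]

theorem LinearEquiv.exists_apply_eq_of_ne_zero {x y : V} (hx : x ≠ 0) (hy : y ≠ 0) :
    ∃ e : V ≃ₗ[K] V, e x = y := by
  obtain ⟨e, he⟩ := Submodule.exists_linearEquiv_restrict_eq
    ((LinearEquiv.toSpanNonzeroSingleton K V x hx).symm ≪≫ₗ
      LinearEquiv.toSpanNonzeroSingleton K V y hy)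
  refine ⟨e, ?_⟩
  rw [← he ⟨x, Submodule.mem_span_singleton_self x⟩, LinearEquiv.trans_apply,
    ← LinearEquiv.toSpanNonzeroSingleton_one K V x hx, LinearEquiv.symm_apply_apply,
    LinearEquiv.toSpanNonzeroSingleton_one]

theorem LinearMap.exists_injective_apply_eq [FiniteDimensional K V] [FiniteDimensional K W]
    (h : Module.finrank K V ≤ Module.finrank K W) {v : V} {w : W} (hv : v ≠ 0) (hw : w ≠ 0) :
    ∃ f : V →ₗ[K] W, Function.Injective f ∧ f v = w := by
  obtain ⟨g, hg⟩ := (finrank_le_iff_exists_linearMap (R := K)).mp h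
  obtain ⟨e, he⟩ :=
    LinearEquiv.exists_apply_eq_of_ne_zero (K := K) ((hg.ne_iff' g.map_zero).mpr hv) hw
  exact ⟨e.toLinearMap ∘ₗ g, e.injective.comp hg, he⟩

theorem Module.finrank_le_ncard_of_span_eq_top {s : Set V} (hs : s.Finite)
    (h : Submodule.span K s = ⊤) : Module.finrank K V ≤ s.ncard := by
  have := hs.fintype
  rw [Set.ncard_eq_toFinset_card', ← finrank_top K V, ← h]
  exact finrank_span_le_card s

end DivisionRing

section Field

variable {K ι κ : Type*} [Field K] [Fintype ι] [Fintype κ]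

theorem Matrix.exists_rank_eq_card_and_mulVec_eq [DecidableEq κ]
    (h : Fintype.card κ ≤ Fintype.card ι) {v : κ → K} {c : ι → K} (hv : v ≠ 0) (hc : c ≠ 0) :
    ∃ M : Matrix ι κ K, M.rank = Fintype.card κ ∧ M *ᵥ v = c := by
  obtain ⟨f, hf, hfv⟩ := LinearMap.exists_injective_apply_eq (K := K)
    (by simpa only [Module.finrank_fintype_fun_eq_card] using h) hv hc
  refine ⟨LinearMap.toMatrix' f, ?_, by rwa [LinearMap.toMatrix'_mulVec]⟩
  rw [Matrix.rank, ← Matrix.toLin'_apply', Matrix.toLin'_toMatrix',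
    LinearMap.finrank_range_of_inj hf, Module.finrank_fintype_fun_eq_card]

theorem exists_ne_zero_dotProduct_eq_zero_of_span_ne_top [DecidableEq ι] {A : Set (ι → K)}
    (h : Submodule.span K A ≠ ⊤) : ∃ c ≠ 0, ∀ a ∈ A, c ⬝ᵥ a = 0 := by
  obtain ⟨φ, hφ, hA⟩ := Submodule.exists_dual_map_eq_bot_of_lt_top h.lt_top inferInstance
  refine ⟨(dotProductEquiv K ι).symm φ, by simpa using hφ, fun a ha => ?_⟩
  rw [← dotProductEquiv_apply_apply, LinearEquiv.apply_symm_apply, ← Submodule.mem_bot K, ← hA]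
  exact Submodule.mem_map_of_mem (Submodule.subset_span ha)

end Field

theorem GenRed.span_eq_top {r m : ℕ} (hm : 1 ≤ m) (hr : m ≤ r) {A : Set (Fin r → ZMod 2)}
    (hA : GenRed r m A) : Submodule.span (ZMod 2) A = ⊤ := by
  by_contra hspan
  obtain ⟨c, hc, hcA⟩ := exists_ne_zero_dotProduct_eq_zero_of_span_ne_top hspan
  have hone : (1 : Fin m → ZMod 2) ≠ 0 := fun h => one_ne_zero (congrFun h ⟨0, hm⟩)
  obtain ⟨M, hrank, hM⟩ :=
    Matrix.exists_rank_eq_card_and_mulVec_eq (by simpa using hr) hone hc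
  obtain ⟨a, haA, hwt⟩ := hA M (by simpa using hrank)
  have hwt_even : (wt (a ᵥ* M) : ZMod 2) = 0 := by
    rw [cast_wt_eq_sum, ← dotProduct_one, ← dotProduct_mulVec, hM, dotProduct_comm, hcA a haA]
  simp [hwt] at hwt_even

theorem stmt_7 (r m : ℕ) (hm : 1 ≤ m) (hr : m ≤ r) (A : Set (Fin r → ZMod 2))
    (hA : GenRed r m A) :
    Submodule.span (ZMod 2) A = ⊤ ∧ r ≤ A.ncard := by
  have hspan := hA.span_eq_top hm hr
  refine ⟨hspan, ?_⟩
  simpa using Module.finrank_le_ncard_of_span_eq_top A.toFinite hspan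
end

section
/- For 2 ≤ m ≤ r, the set A_{r,m} = {a ∈ F_2^r : a_1 = 1 and wt(a) ≤ m} is a generic (r,m)-erasure correcting set. -/
open Matrix

/-- The set `A_{r,m}` of vectors with first coordinate `1` and weight at most `m`. -/
def Arm (r m : ℕ) (h : 0 < r) : Set (Fin r → ZMod 2) :=
  {a | a ⟨0, h⟩ = 1 ∧ wt a ≤ m}

lemma zmod2_ne_zero {c : ZMod 2} (h : c ≠ 0) : c = 1 := by
  revert h; revert c; decide

/-- Key combinatorial lemma: if the `v i` span `F_2^n`, there is a subset `S` of indices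
containing `0`, of size at most `max n 2`, whose sum is a standard unit vector. -/
lemma key {n r : ℕ} (hn : 0 < n) (hr : 0 < r) (v : Fin r → (Fin n → ZMod 2))
    (hspan : Submodule.span (ZMod 2) (Set.range v) = ⊤) :
    ∃ (S : Finset (Fin r)) (j : Fin n),
      (⟨0, hr⟩ : Fin r) ∈ S ∧ S.card ≤ max n 2 ∧
      ∑ i ∈ S, v i = Pi.single j 1 := by
  classical
  set i0 : Fin r := ⟨0, hr⟩ with hi0
  -- obtain a basis of F_2^n consisting of some of the v i, containing v i0 if v i0 ≠ 0
  obtain ⟨b, hbt, hsb, hbli⟩ :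
      ∃ b : Set (Fin n → ZMod 2), b ⊆ Set.range v ∧
        (v i0 ≠ 0 → v i0 ∈ b) ∧ (LinearIndependent (ZMod 2) (fun x : b => (x : Fin n → ZMod 2)) ∧
        Submodule.span (ZMod 2) b = ⊤) := by
    by_cases h0 : v i0 = 0
    · obtain ⟨b, hbt, hbspan, hbli⟩ := exists_linearIndependent (ZMod 2) (Set.range v)
      exact ⟨b, hbt, fun h => absurd h0 h, hbli, by rw [hbspan, hspan]⟩
    · have hli : LinearIndependent (ZMod 2)
          (fun x : ({v i0} : Set (Fin n → ZMod 2)) => (x : Fin n → ZMod 2)) :=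
        (linearIndepOn_singleton_iff (R := ZMod 2) (v := (id : (Fin n → ZMod 2) → Fin n → ZMod 2)) (i := v i0)).2 h0
      have hsub : ({v i0} : Set (Fin n → ZMod 2)) ⊆ Set.range v :=
        Set.singleton_subset_iff.2 ⟨i0, rfl⟩
      obtain ⟨b, hbt, hsb, htb, hbli⟩ := exists_linearIndepOn_id_extension hli hsub
      refine ⟨b, hbt, fun _ => hsb rfl, hbli, ?_⟩
      have : Set.range v ⊆ Submodule.span (ZMod 2) b := htb
      refine le_antisymm le_top ?_
      rw [← hspan]
      exact Submodule.span_le.2 this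
  obtain ⟨hbli, hbspan⟩ := hbli
  have hbfin : b.Finite := hbli.setFinite
  haveI : Fintype b := hbfin.fintype
  -- basis
  let B : Module.Basis b (ZMod 2) (Fin n → ZMod 2) :=
    Module.Basis.mk hbli (by rw [Subtype.range_coe, hbspan])
  have hB : ∀ w : b, B w = (w : Fin n → ZMod 2) := fun w => by simp [B]
  have hcardb : Fintype.card b ≤ n := by
    have := hbli.fintype_card_le_finrank
    simpa using this
  -- support finsets
  let T : (Fin n → ZMod 2) → Finset b := fun x => Finset.univ.filter (fun w => B.repr x w ≠ 0)
  have sumT : ∀ x, ∑ w ∈ T x, (w : Fin n → ZMod 2) = x := by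
    intro x
    have h1 : ∑ w ∈ T x, (w : Fin n → ZMod 2) = ∑ w ∈ T x, B.repr x w • (w : Fin n → ZMod 2) := by
      refine Finset.sum_congr rfl fun w hw => ?_
      rw [zmod2_ne_zero (Finset.mem_filter.1 hw).2, one_smul]
    rw [h1]
    have h2 : ∑ w ∈ T x, B.repr x w • (w : Fin n → ZMod 2)
        = ∑ w : b, B.repr x w • (w : Fin n → ZMod 2) := by
      refine Finset.sum_subset (Finset.filter_subset _ _) fun w _ hw => ?_
      have : B.repr x w = 0 := by
        by_contra hc
        exact hw (Finset.mem_filter.2 ⟨Finset.mem_univ _, hc⟩)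
      rw [this, zero_smul]
    rw [h2]
    have := B.sum_repr x
    simpa [hB] using this
  have hTcard : ∀ x, (T x).card ≤ Fintype.card b := fun x =>
    le_trans (Finset.card_le_card (Finset.filter_subset _ _)) (by simp)
  -- choice of indices
  have hchoice : ∀ w : b, ∃ i : Fin r, v i = (w : Fin n → ZMod 2) := fun w => hbt w.2
  let f : b → Fin r := fun w => if (w : Fin n → ZMod 2) = v i0 then i0
    else Classical.choose (hchoice w)
  have hf : ∀ w : b, v (f w) = (w : Fin n → ZMod 2) := by
    intro w
    by_cases h : (w : Fin n → ZMod 2) = v i0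
    · simp only [f, if_pos h, h]
    · simp only [f, if_neg h]; exact Classical.choose_spec (hchoice w)
  have hfinj : Function.Injective f := by
    intro w1 w2 h
    apply Subtype.ext
    rw [← hf w1, ← hf w2, h]
  have hsum_image : ∀ x, ∑ i ∈ (T x).image f, v i = x := by
    intro x
    rw [Finset.sum_image (fun a _ c _ h => hfinj h)]
    calc ∑ w ∈ T x, v (f w) = ∑ w ∈ T x, (w : Fin n → ZMod 2) :=
          Finset.sum_congr rfl fun w _ => hf w
      _ = x := sumT x
  have hcard_image : ∀ x, ((T x).image f).card = (T x).card := fun x =>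
    Finset.card_image_of_injective _ hfinj
  by_cases h0 : v i0 = 0
  · -- first row is zero: insert i0 into the set
    have h0b : (0 : Fin n → ZMod 2) ∉ b := fun hmem =>
      (hbli.ne_zero ⟨0, hmem⟩) rfl
    have hfne : ∀ w : b, f w ≠ i0 := by
      intro w h
      apply h0b
      have : v (f w) = (w : Fin n → ZMod 2) := hf w
      rw [h, h0] at this
      rw [this]; exact w.2
    obtain ⟨j, hj⟩ : ∃ j : Fin n, (T (Pi.single j 1)).card + 1 ≤ max n 2 := by
      rcases le_or_gt n 1 with h1 | h2
      · refine ⟨⟨0, hn⟩, ?_⟩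
        have h := le_trans (hTcard (Pi.single (⟨0, hn⟩ : Fin n) 1)) hcardb
        omega
      · rcases lt_or_eq_of_le hcardb with hlt | heq
        · refine ⟨⟨0, hn⟩, ?_⟩
          have h := hTcard (Pi.single (⟨0, hn⟩ : Fin n) 1)
          omega
        · -- card b = n ≥ 2: at most one unit vector has full support
          set j1 : Fin n := ⟨0, by omega⟩
          set j2 : Fin n := ⟨1, h2⟩
          have hjne : j1 ≠ j2 := by simp [j1, j2, Fin.ext_iff]
          have : T (Pi.single j1 1) ≠ Finset.univ ∨ T (Pi.single j2 1) ≠ Finset.univ := by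
            by_contra hc
            push_neg at hc
            have e1 := sumT (Pi.single j1 1)
            have e2 := sumT (Pi.single j2 1)
            rw [hc.1] at e1
            rw [hc.2] at e2
            have : (Pi.single j1 1 : Fin n → ZMod 2) = Pi.single j2 1 := by rw [← e1, ← e2]
            have h11 := congrFun this j1
            simp [Pi.single_apply, hjne] at h11
          rcases this with hne | hne
          · refine ⟨j1, ?_⟩
            have := Finset.card_lt_card (Finset.ssubset_univ_iff.2 hne)
            simp only [Finset.card_univ] at this
            omega
          · refine ⟨j2, ?_⟩
            have := Finset.card_lt_card (Finset.ssubset_univ_iff.2 hne)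
            simp only [Finset.card_univ] at this
            omega
    set x := (Pi.single j 1 : Fin n → ZMod 2)
    refine ⟨insert i0 ((T x).image f), j, Finset.mem_insert_self _ _, ?_, ?_⟩
    · have := Finset.card_insert_le i0 ((T x).image f)
      have hc := hcard_image x
      omega
    · have hnotmem : i0 ∉ (T x).image f := by
        intro h
        obtain ⟨w, _, hw⟩ := Finset.mem_image.1 h
        exact hfne w hw
      rw [Finset.sum_insert hnotmem, h0, zero_add]
      exact hsum_image x
  · -- first row nonzero: v i0 is in the basis
    set w0 : b := ⟨v i0, hsb h0⟩ with hw0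
    -- find j with nonzero coordinate at w0
    obtain ⟨j, hj⟩ : ∃ j : Fin n, B.repr (Pi.single j 1) w0 ≠ 0 := by
      by_contra hc
      push_neg at hc
      have hx : (v i0) = ∑ j : Fin n, (v i0 j) • (Pi.single j 1 : Fin n → ZMod 2) := by
        funext k
        simp [Pi.single_apply, Finset.sum_ite_eq', mul_comm]
      have h1 : B.repr (v i0) w0 = 0 := by
        rw [hx, map_sum, Finset.sum_apply']
        refine Finset.sum_eq_zero fun j _ => ?_
        rw [LinearEquiv.map_smul, Finsupp.smul_apply, hc j, smul_zero]
      have h2 : B.repr (v i0) w0 = 1 := by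
        have : v i0 = B w0 := (hB w0).symm
        rw [this, B.repr_self]
        simp
      rw [h1] at h2
      exact one_ne_zero h2.symm
    set x := (Pi.single j 1 : Fin n → ZMod 2)
    have hw0T : w0 ∈ T x := Finset.mem_filter.2 ⟨Finset.mem_univ _, hj⟩
    refine ⟨(T x).image f, j, ?_, ?_, hsum_image x⟩
    · refine Finset.mem_image.2 ⟨w0, hw0T, ?_⟩
      simp [f, hw0]
    · rw [hcard_image]
      exact le_trans (le_trans (hTcard x) hcardb) (le_max_left _ _)

theorem stmt_8 (r m : ℕ) (hm : 2 ≤ m) (hr : m ≤ r) :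
    GenCor r m (Arm r m (by omega)) := by
  intro m' hm'1 hm'2 M hrank
  classical
  have hr0 : 0 < r := by omega
  -- rows of M span the whole space
  have hspan : Submodule.span (ZMod 2) (Set.range M) = ⊤ := by
    have h1 : Mᵀ.rank = m' := by rw [Matrix.rank_transpose]; exact hrank
    have h2 : LinearMap.range Mᵀ.mulVecLin = Submodule.span (ZMod 2) (Set.range M) := by
      rw [Matrix.range_mulVecLin]; rfl
    have h3 : Module.finrank (ZMod 2) (Submodule.span (ZMod 2) (Set.range M)) = m' := by
      rw [← h2]
      exact h1
    apply Submodule.eq_top_of_finrank_eq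
    rw [h3]
    simp
  obtain ⟨S, j, hi0, hcard, hsum⟩ := key (by omega : 0 < m') hr0 M hspan
  set a : Fin r → ZMod 2 := fun i => if i ∈ S then 1 else 0 with ha
  have hwta : wt a = S.card := by
    unfold wt
    congr 1
    ext i
    simp [a]
  have haM : Matrix.vecMul a M = Pi.single j 1 := by
    funext k
    rw [← hsum]
    simp only [Matrix.vecMul, dotProduct, a]
    rw [show (∑ i ∈ S, M i) k = ∑ i ∈ S, M i k from Finset.sum_apply ..]
    simp only [ite_mul, one_mul, zero_mul]
    rw [Finset.sum_ite_mem, Finset.univ_inter]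
  refine ⟨a, ⟨?_, ?_⟩, ?_⟩
  · simp only [a]
    rw [if_pos]
    exact hi0
  · rw [hwta]
    have : max m' 2 ≤ m := by omega
    omega
  · rw [haM]
    unfold wt
    have : Finset.univ.filter (fun k => (Pi.single j 1 : Fin m' → ZMod 2) k ≠ 0) = {j} := by
      ext k
      simp only [Finset.mem_filter, Finset.mem_univ, true_and, Finset.mem_singleton,
        Pi.single_apply]
      by_cases h : k = j <;> simp [h]
    rw [this]
    simp
end

section
/- Let M be a binary r×m matrix of rank m whose first row is nonzero. Then there exists a vector a ∈ F_2^r with a_1 = 1 and wt(a) ≤ m such that wt(aM) = 1. -/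
open Matrix

theorem stmt_10 (r m : ℕ) (h0 : 0 < r) (M : Matrix (Fin r) (Fin m) (ZMod 2))
    (hrank : M.rank = m) (hrow : M ⟨0, h0⟩ ≠ 0) :
    ∃ a : Fin r → ZMod 2, a ⟨0, h0⟩ = 1 ∧ wt a ≤ m ∧ wt (Matrix.vecMul a M) = 1 := by
  classical
  set v0 : Fin m → ZMod 2 := M ⟨0, h0⟩ with hv0
  -- the rows span everything
  have hspan : Submodule.span (ZMod 2) (Set.range M) = ⊤ := by
    have h1 : Mᵀ.rank = m := by rw [Matrix.rank_transpose]; exact hrank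
    have h2 : Module.finrank (ZMod 2) (LinearMap.range Mᵀ.mulVecLin) = m := h1
    rw [Matrix.range_mulVecLin, Matrix.col_transpose, Matrix.row] at h2
    apply Submodule.eq_top_of_finrank_eq
    rw [h2, Module.finrank_pi]
    simp
  -- extend {v0} to a basis inside the rows
  have hli : LinearIndependent (ZMod 2) ((↑) : ({v0} : Set (Fin m → ZMod 2)) → Fin m → ZMod 2) :=
    LinearIndepOn.singleton (v := id) hrow
  have hsub : ({v0} : Set (Fin m → ZMod 2)) ⊆ Set.range M := by
    rintro x rfl; exact ⟨_, rfl⟩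
  obtain ⟨b, hbt, hsb, hspanb, hbli'⟩ := exists_linearIndepOn_id_extension hli hsub
  have hbli : LinearIndependent (ZMod 2) ((↑) : b → Fin m → ZMod 2) := hbli'
  have hv0b : v0 ∈ b := hsb rfl
  have hspanb' : Submodule.span (ZMod 2) b = ⊤ := by
    apply top_unique
    rw [← hspan]
    exact Submodule.span_le.2 hspanb
  -- b is a basis
  let B : Module.Basis b (ZMod 2) (Fin m → ZMod 2) :=
    Module.Basis.mk hbli (by rw [Subtype.range_coe, hspanb'])
  haveI hfin : Finite b := Module.Basis.finite_index_of_rank_lt_aleph0 B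
    (by rw [Module.rank_lt_aleph0_iff]; infer_instance)
  haveI : Fintype b := Fintype.ofFinite _
  have hcard : Fintype.card b = m := by
    have := Module.finrank_eq_card_basis B
    rw [Module.finrank_pi] at this
    simpa using this.symm
  -- coefficient functional at v0
  let f : (Fin m → ZMod 2) →ₗ[ZMod 2] ZMod 2 :=
    (Finsupp.lapply (⟨v0, hv0b⟩ : b)).comp B.repr.toLinearMap
  have hB : (B ⟨v0, hv0b⟩ : Fin m → ZMod 2) = v0 := by simp [B, Module.Basis.mk_apply]
  have hfv0 : f v0 = 1 := by
    have h1 : f v0 = f (B ⟨v0, hv0b⟩) := by rw [hB]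
    rw [h1]
    simp [f, Module.Basis.repr_self_apply]
  -- there is a coordinate j with f (e_j) = 1
  have hj : ∃ j : Fin m, f (Pi.single j 1) ≠ 0 := by
    by_contra h
    push_neg at h
    have hz : f v0 = 0 := by
      have hv : v0 = ∑ j : Fin m, v0 j • Pi.single j (1 : ZMod 2) := by
        ext k; simp [Pi.single_apply, Finset.sum_ite_eq']
      rw [hv, map_sum]
      simp only [LinearMap.map_smul, h, smul_zero, Finset.sum_const_zero]
    rw [hfv0] at hz; exact one_ne_zero hz
  obtain ⟨j, hjne⟩ := hj
  set y : Fin m → ZMod 2 := Pi.single j 1 with hy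
  -- choose row indices for basis elements
  have hpick : ∀ v : b, ∃ i : Fin r,
      M i = (v : Fin m → ZMod 2) ∧ ((v : Fin m → ZMod 2) = v0 → i = ⟨0, h0⟩) := by
    rintro ⟨v, hv⟩
    by_cases hveq : v = v0
    · exact ⟨⟨0, h0⟩, by simp [hveq, hv0], fun _ => rfl⟩
    · obtain ⟨i, hi⟩ := hbt hv
      exact ⟨i, hi, fun h => absurd h hveq⟩
  choose g hg1 hg2 using hpick
  have hginj : Function.Injective g := by
    intro u v huv
    have : (u : Fin m → ZMod 2) = (v : Fin m → ZMod 2) := by rw [← hg1 u, ← hg1 v, huv]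
    exact Subtype.ext this
  -- the vector a
  set c : b →₀ ZMod 2 := B.repr y with hc
  set a : Fin r → ZMod 2 :=
    ∑ v : b, c v • (Pi.single (g v) 1 : Fin r → ZMod 2) with ha
  have ha_apply : ∀ i : Fin r,
      a i = ∑ v : b, c v • (Pi.single (g v) 1 : Fin r → ZMod 2) i := by
    intro i
    rw [ha, Finset.sum_apply]
    rfl
  refine ⟨a, ?_, ?_, ?_⟩
  · -- a 0 = 1
    have hgv0 : g ⟨v0, hv0b⟩ = ⟨0, h0⟩ := hg2 ⟨v0, hv0b⟩ rfl
    rw [ha_apply]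
    rw [Finset.sum_eq_single (⟨v0, hv0b⟩ : b)]
    · rw [hgv0]
      have hcv : c ⟨v0, hv0b⟩ = f y := rfl
      have hf1 : f y = 1 := by
        have h2 : ∀ x : ZMod 2, x ≠ 0 → x = 1 := by decide
        exact h2 _ hjne
      rw [hcv, hf1, Pi.single_eq_same, smul_eq_mul, mul_one]
    · intro v _ hvne
      have : g v ≠ ⟨0, h0⟩ := fun h => hvne (hginj (h.trans hgv0.symm))
      simp [Pi.single_eq_of_ne (Ne.symm this)]
    · intro h; exact absurd (Finset.mem_univ _) h
  · -- wt a ≤ m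
    have hsupp : (Finset.univ.filter (fun i => a i ≠ 0)) ⊆ Finset.univ.image g := by
      intro i hi
      simp only [Finset.mem_filter] at hi
      by_contra hni
      apply hi.2
      rw [ha_apply]
      apply Finset.sum_eq_zero
      intro v _
      have : g v ≠ i := by
        intro h; exact hni (Finset.mem_image.2 ⟨v, Finset.mem_univ _, h⟩)
      simp [Pi.single_eq_of_ne (Ne.symm this)]
    calc wt a ≤ (Finset.univ.image g).card := Finset.card_le_card hsupp
      _ ≤ Fintype.card b := Finset.card_image_le.trans (by simp)
      _ = m := hcard
  · -- wt (a ᵥ* M) = 1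
    have hvm : Matrix.vecMul a M = y := by
      have h1 : Matrix.vecMul a M = ∑ v : b, c v • M (g v) := by
        rw [ha, show Matrix.vecMul (∑ v : b, c v • (Pi.single (g v) 1 : Fin r → ZMod 2)) M
            = M.vecMulLinear (∑ v : b, c v • (Pi.single (g v) 1 : Fin r → ZMod 2)) from rfl,
          map_sum]
        congr 1
        ext v : 1
        rw [LinearMap.map_smul, Matrix.vecMulLinear_apply, Matrix.single_one_vecMul, Matrix.row]
      rw [h1]
      have h2 : ∑ v : b, c v • M (g v) = ∑ v : b, c v • (v : Fin m → ZMod 2) := by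
        apply Finset.sum_congr rfl
        intro v _
        rw [hg1 v]
      rw [h2]
      have h3 := B.sum_repr y
      rw [← h3]
      apply Finset.sum_congr rfl
      intro v _
      rw [show (B v : Fin m → ZMod 2) = (v : Fin m → ZMod 2) by simp [B, Module.Basis.mk_apply]]
    rw [hvm]
    unfold wt
    rw [Finset.card_eq_one]
    refine ⟨j, ?_⟩
    ext k
    simp only [Finset.mem_filter, Finset.mem_univ, true_and, Finset.mem_singleton, hy]
    constructor
    · intro h
      by_contra hk
      exact h (Pi.single_eq_of_ne hk 1)
    · rintro rfl; simp
end

section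
/- Let 2 ≤ m ≤ r and let M be a binary r×m matrix of rank m whose first row is the zero vector. Then there exists a vector a ∈ F_2^r with a_1 = 1 and wt(a) ≤ m such that wt(aM) = 1. -/
open Matrix

/-!
Choose a basis `b` of `F₂^m` among the rows of `M`. Over `F₂` every coordinate of a vector in
the basis `b` is `0` or `1`, so each standard vector `e_j` is the sum of the rows in the support
of its coordinates, and distinct vectors have distinct supports. Since `m ≥ 2`, some `e_j` is
therefore the sum of at most `m - 1` basis rows. Adding the zero first row to these rows gives
`a` with `a₁ = 1`, `wt a ≤ m` and `a M = e_j`.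
-/

open Finset Function

theorem wt_indicator {n : ℕ} (T : Finset (Fin n)) :
    wt (fun i => if i ∈ T then 1 else 0) = #T := by
  simp [wt]

theorem wt_single {n : ℕ} (j : Fin n) : wt (Pi.single j 1) = 1 := by
  classical
  simp [wt, Pi.single_apply, filter_eq']

theorem Matrix.vecMul_indicator {R ι n : Type*} [Semiring R] [Fintype ι] [DecidableEq ι]
    (T : Finset ι) (M : Matrix ι n R) :
    (fun i => if i ∈ T then 1 else 0) ᵥ* M = ∑ i ∈ T, M.row i := by
  ext k
  simp [vecMul_eq_sum, ite_apply]

theorem ZMod.eq_one_of_ne_zero {x : ZMod 2} (hx : x ≠ 0) : x = 1 :=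
  Fin.eq_one_of_ne_zero x hx

theorem Finsupp.eq_of_support_eq_zmod_two {ι : Type*} {f g : ι →₀ ZMod 2}
    (h : f.support = g.support) : f = g := by
  ext i
  by_cases hi : i ∈ f.support
  · rw [ZMod.eq_one_of_ne_zero (mem_support_iff.mp hi),
      ZMod.eq_one_of_ne_zero (mem_support_iff.mp (h ▸ hi))]
  · rw [notMem_support_iff.mp hi, notMem_support_iff.mp (h ▸ hi)]

namespace Module.Basis

variable {ι V : Type*} [AddCommGroup V] [Module (ZMod 2) V] (b : Basis ι (ZMod 2) V)

theorem sum_support_repr_zmod_two (v : V) : ∑ i ∈ (b.repr v).support, b i = v := by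
  conv_rhs => rw [← b.linearCombination_repr v]
  rw [Finsupp.linearCombination_apply, Finsupp.sum]
  refine sum_congr rfl fun i hi => ?_
  rw [ZMod.eq_one_of_ne_zero (Finsupp.mem_support_iff.mp hi), one_smul]

theorem exists_support_repr_ne_univ_zmod_two [Fintype ι] {κ : Type*} [Nontrivial κ]
    {f : κ → V} (hf : Function.Injective f) : ∃ j, (b.repr (f j)).support ≠ univ := by
  obtain ⟨j₁, j₂, hne⟩ := exists_pair_ne κ
  by_contra! h
  exact hne (hf (b.repr.injective (Finsupp.eq_of_support_eq_zmod_two ((h j₁).trans (h j₂).symm))))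

end Module.Basis

universe u

theorem Matrix.exists_basis_rows_of_rank_eq {K : Type*} {ι : Type u} {n : Type*} [Field K]
    [Fintype ι] [Fintype n] (M : Matrix ι n K) (h : M.rank = Fintype.card n) :
    ∃ (κ : Type u) (row : κ → ι) (b : Module.Basis κ K (n → K)),
      Injective row ∧ ⇑b = M.row ∘ row := by
  have hspan : Submodule.span K (Set.range M.row) = ⊤ := by
    apply Submodule.eq_top_of_finrank_eq
    rw [Module.finrank_fintype_fun_eq_card, ← h, rank_eq_finrank_span_row]
  obtain ⟨κ, row, hinj, hsp, hli⟩ := exists_linearIndependent' K M.row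
  exact ⟨κ, row, Module.Basis.mk hli (hsp.trans hspan).ge, hinj, Module.Basis.coe_mk _ _⟩

theorem stmt_11 (r m : ℕ) (hm : 2 ≤ m) (hr : m ≤ r) (M : Matrix (Fin r) (Fin m) (ZMod 2))
    (hrank : M.rank = m) (hrow : M ⟨0, by omega⟩ = 0) :
    ∃ a : Fin r → ZMod 2, a ⟨0, by omega⟩ = (1 : ZMod 2) ∧ wt a ≤ m ∧
      wt (Matrix.vecMul a M) = 1 := by
  classical
  set z : Fin r := ⟨0, by omega⟩
  obtain ⟨κ, row, b, hinj, hb⟩ := M.exists_basis_rows_of_rank_eq (by simpa using hrank)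
  have : Fintype κ := @Fintype.ofFinite κ (Module.Finite.finite_basis b)
  have hcard : Fintype.card κ = m := by
    rw [← Module.finrank_eq_card_basis b, Module.finrank_fin_fun]
  have : Nontrivial (Fin m) := Fin.nontrivial_iff_two_le.mpr hm
  obtain ⟨j, hj⟩ := b.exists_support_repr_ne_univ_zmod_two (Pi.basisFun (ZMod 2) (Fin m)).injective
  rw [Pi.basisFun_apply] at hj
  set S := (b.repr (Pi.single j 1)).support
  have hz : z ∉ S.image row := by
    intro hz
    obtain ⟨k, -, hk⟩ := mem_image.mp hz
    exact b.ne_zero k (by rw [hb, Function.comp_apply, hk]; exact hrow)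
  refine ⟨fun i => if i ∈ insert z (S.image row) then 1 else 0, by simp, ?_, ?_⟩
  · rw [wt_indicator, card_insert_of_notMem hz, card_image_of_injective _ hinj]
    exact hcard ▸ (card_lt_iff_ne_univ S).mpr hj
  · have hsum : ∑ k ∈ S, M.row (row k) = Pi.single j 1 := by
      simpa only [hb, Function.comp_apply] using b.sum_support_repr_zmod_two (Pi.single j 1)
    rw [vecMul_indicator, sum_insert hz, show M.row z = 0 from hrow, zero_add,
      sum_image hinj.injOn, hsum, wt_single]
end

section
/- The set W_r = {e_i : 1 ≤ i ≤ r} ∪ {e_1 + e_i + e_j : 2 ≤ i < j ≤ r} equals {aS : a ∈ A_{r,3}}, where S is the invertible r×r binary matrix whose first column is the all-one vector and whose j-th column is e_j^T for 2 ≤ j ≤ r, and A_{r,3} = {a ∈ F_2^r : a_1 = 1, wt(a) ≤ 3}. Consequently, for r ≥ 3, W_r is a generic (r,3)-erasure correcting set. -/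
open Matrix

/-- The `i`-th standard unit vector of `F_2^r`. -/
def eVec (r : ℕ) (i : Fin r) : Fin r → ZMod 2 := Pi.single i 1

/-- The matrix `S` whose first column is all-one and whose `j`-th column is `e_j`
for `j ≥ 2`. -/
def Smat (r : ℕ) : Matrix (Fin r) (Fin r) (ZMod 2) :=
  fun i j => if (j : ℕ) = 0 then 1 else if i = j then 1 else 0

/-- The Weber–Abdel-Ghaffar set `W_r`. -/
def Wset (r : ℕ) (h : 0 < r) : Set (Fin r → ZMod 2) :=
  {v | ∃ i : Fin r, v = eVec r i} ∪
    {v | ∃ i j : Fin r, 0 < (i : ℕ) ∧ i < j ∧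
      v = eVec r ⟨0, h⟩ + eVec r i + eVec r j}

open Module

/-! ### auxiliary lemmas -/

lemma keyH {r m : ℕ} (M : Matrix (Fin r) (Fin m) (ZMod 2)) (h : M.rank = m)
    (c : Fin m → ZMod 2) (hc : c ≠ 0) : ∃ i, ∑ j, M i j * c j ≠ 0 := by
  have hker : LinearMap.ker M.mulVecLin = ⊥ := by
    have h1 := LinearMap.finrank_range_add_finrank_ker M.mulVecLin
    rw [show finrank (ZMod 2) (LinearMap.range M.mulVecLin) = M.rank from rfl, h,
      finrank_fin_fun] at h1
    have : finrank (ZMod 2) (LinearMap.ker M.mulVecLin) = 0 := by omega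
    exact Submodule.finrank_eq_zero.mp this
  have hmv : M.mulVec c ≠ 0 := by
    intro h0
    apply hc
    have : c ∈ LinearMap.ker M.mulVecLin := by simpa [Matrix.mulVecLin] using h0
    simpa [hker] using this
  obtain ⟨i, hi⟩ := Function.ne_iff.mp hmv
  exact ⟨i, by simpa [Matrix.mulVec, dotProduct] using hi⟩

lemma vecMul_eVec {r m : ℕ} (M : Matrix (Fin r) (Fin m) (ZMod 2)) (i : Fin r) :
    Matrix.vecMul (eVec r i) M = M i := by
  ext j
  simp [Matrix.vecMul, dotProduct, eVec, Pi.single_apply, ite_mul]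

lemma wt_eVec (r : ℕ) (i : Fin r) : wt (eVec r i) = 1 := by
  unfold wt
  rw [show Finset.univ.filter (fun j => eVec r i j ≠ 0) = {i} from ?_]
  · simp
  · ext j
    simp [eVec, Pi.single_apply]

lemma vecMul_Smat {r : ℕ} (a : Fin r → ZMod 2) (j : Fin r) :
    Matrix.vecMul a (Smat r) j = if (j : ℕ) = 0 then ∑ i, a i else a j := by
  by_cases hj : (j : ℕ) = 0 <;>
    simp [Matrix.vecMul, dotProduct, Smat, hj, mul_ite]

lemma sum_eVec {r : ℕ} (i : Fin r) : ∑ k, eVec r i k = 1 := by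
  simp [eVec, Pi.single_apply]

lemma eta1 (v : Fin 1 → ZMod 2) : v = ![v 0] := by
  funext k; fin_cases k <;> rfl

lemma eta2 (v : Fin 2 → ZMod 2) : v = ![v 0, v 1] := by
  funext k; fin_cases k <;> rfl

lemma eta3 (v : Fin 3 → ZMod 2) : v = ![v 0, v 1, v 2] := by
  funext k; fin_cases k <;> rfl

lemma dec1 : ∀ a : ZMod 2, a ≠ 0 → wt ![a] = 1 := by decide

lemma dec2 : ∀ a b : ZMod 2, a + b ≠ 0 → wt ![a, b] = 1 := by decide

lemma dec111 : ∀ a b c : ZMod 2, (a + b + c ≠ 0 ∧ wt ![a,b,c] ≠ 1) →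
    a = 1 ∧ b = 1 ∧ c = 1 := by decide

lemma decA1 : ∀ a b c : ZMod 2, (wt ![a,b,c] ≠ 1 ∧ b + c ≠ 0) →
    wt ![0+1+a, 0+1+b, 0+1+c] = 1 ∧ ¬(a=0∧b=0∧c=0) ∧ ¬(a=1∧b=1∧c=1) := by decide

lemma decA2 : ∀ p q s a b c : ZMod 2,
    (wt ![p,q,s] ≠ 1 ∧ ¬(p=1∧q=1∧s=1) ∧ ¬(p=0∧q=0∧s=0) ∧ wt ![a,b,c] ≠ 1 ∧
      a*p+b*q+c*s ≠ 0) →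
    wt ![p+1+a, q+1+b, s+1+c] = 1 ∧ ¬(a=p∧b=q∧c=s) ∧ ¬(a=1∧b=1∧c=1) := by decide

lemma decB : ∀ a b c d e f : ZMod 2,
    (wt ![a,b,c] ≠ 1 ∧ b + c ≠ 0 ∧ wt ![d,e,f] ≠ 1 ∧ d*a+e*b+f*c ≠ 0) →
    wt ![1+a+d, 1+b+e, 1+c+f] = 1 ∧ ¬(a=1∧b=1∧c=1) ∧ ¬(d=1∧e=1∧f=1) ∧
      ¬(d=a∧e=b∧f=c) := by decide

lemma genred1 {r : ℕ} (h : 0 < r) : GenRed r 1 (Wset r h) := by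
  intro M hrank
  obtain ⟨i, hi⟩ := keyH M hrank ![1] (by decide)
  rw [Fin.sum_univ_one] at hi
  refine ⟨eVec r i, Or.inl ⟨i, rfl⟩, ?_⟩
  rw [vecMul_eVec, eta1 (M i)]
  exact dec1 _ (by simpa using hi)

lemma genred2 {r : ℕ} (h : 0 < r) : GenRed r 2 (Wset r h) := by
  intro M hrank
  obtain ⟨i, hi⟩ := keyH M hrank ![1, 1] (by decide)
  rw [Fin.sum_univ_two] at hi
  refine ⟨eVec r i, Or.inl ⟨i, rfl⟩, ?_⟩
  rw [vecMul_eVec, eta2 (M i)]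
  exact dec2 _ _ (by simpa using hi)

lemma genred3 {r : ℕ} (h : 0 < r) : GenRed r 3 (Wset r h) := by
  intro M hrank
  set z : Fin r := ⟨0, h⟩ with hz
  by_cases hex : ∃ i, wt (M i) = 1
  · obtain ⟨i, hi⟩ := hex
    exact ⟨eVec r i, Or.inl ⟨i, rfl⟩, by rw [vecMul_eVec]; exact hi⟩
  push_neg at hex
  have hwt : ∀ i, wt ![M i 0, M i 1, M i 2] ≠ 1 := fun i => by
    rw [← eta3 (M i)]; exact hex i
  -- a helper to conclude
  have key : ∀ i j : Fin r, i ≠ z → j ≠ z → i ≠ j →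
      wt ![M z 0 + M i 0 + M j 0, M z 1 + M i 1 + M j 1, M z 2 + M i 2 + M j 2] = 1 →
      ∃ a ∈ Wset r h, wt (Matrix.vecMul a M) = 1 := by
    intro i j hi hj hij hw
    have hsum : ∀ i j : Fin r, wt (Matrix.vecMul (eVec r z + eVec r i + eVec r j) M)
        = wt ![M z 0 + M i 0 + M j 0, M z 1 + M i 1 + M j 1, M z 2 + M i 2 + M j 2] := by
      intro i j
      congr 1
      rw [Matrix.add_vecMul, Matrix.add_vecMul, vecMul_eVec, vecMul_eVec, vecMul_eVec]
      rw [eta3 (M z + M i + M j)]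
      simp [Pi.add_apply]
    have hvi : 0 < (i : ℕ) := by
      rcases Nat.eq_zero_or_pos (i : ℕ) with hp | hp
      · exact absurd (Fin.ext hp : i = z) hi
      · exact hp
    have hvj : 0 < (j : ℕ) := by
      rcases Nat.eq_zero_or_pos (j : ℕ) with hp | hp
      · exact absurd (Fin.ext hp : j = z) hj
      · exact hp
    rcases lt_or_gt_of_ne hij with hlt | hlt
    · exact ⟨eVec r z + eVec r i + eVec r j, Or.inr ⟨i, j, hvi, hlt, rfl⟩,
        by rw [hsum]; exact hw⟩
    · refine ⟨eVec r z + eVec r j + eVec r i, Or.inr ⟨j, i, hvj, hlt, rfl⟩, ?_⟩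
      rw [hsum]
      have : ∀ k : Fin 3, M z k + M j k + M i k = M z k + M i k + M j k := by
        intro k; ring
      rw [this 0, this 1, this 2]
      exact hw
  -- find a row equal to ![1,1,1]
  obtain ⟨i1, hi1⟩ := keyH M hrank ![1, 1, 1] (by decide)
  rw [Fin.sum_univ_three] at hi1
  simp only [Matrix.cons_val_zero, Matrix.cons_val_one, Matrix.head_cons, mul_one,
    Matrix.cons_val_two, Matrix.tail_cons] at hi1
  obtain ⟨e1, e2, e3⟩ := dec111 (M i1 0) (M i1 1) (M i1 2) ⟨hi1, hwt i1⟩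
  by_cases h111 : M z 0 = 1 ∧ M z 1 = 1 ∧ M z 2 = 1
  · -- Branch B
    obtain ⟨i2, hi2⟩ := keyH M hrank ![0, 1, 1] (by decide)
    rw [Fin.sum_univ_three] at hi2
    simp only [Matrix.cons_val_zero, Matrix.cons_val_one, Matrix.head_cons, mul_one,
      mul_zero, zero_add, Matrix.cons_val_two, Matrix.tail_cons] at hi2
    obtain ⟨i3, hi3⟩ := keyH M hrank (M i2) (by
      intro h0
      apply hi2
      rw [h0]; simp)
    rw [Fin.sum_univ_three] at hi3
    obtain ⟨hw, hn2, hn3, hn23⟩ := decB (M i2 0) (M i2 1) (M i2 2)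
      (M i3 0) (M i3 1) (M i3 2) ⟨hwt i2, hi2, hwt i3, hi3⟩
    refine key i2 i3 ?_ ?_ ?_ ?_
    · intro he; exact hn2 (by rw [he]; exact h111)
    · intro he; exact hn3 (by rw [he]; exact h111)
    · intro he; exact hn23 (by rw [he]; exact ⟨rfl, rfl, rfl⟩)
    · obtain ⟨z1, z2, z3⟩ := h111
      rw [z1, z2, z3]
      exact hw
  · -- Branch A
    by_cases h000 : M z 0 = 0 ∧ M z 1 = 0 ∧ M z 2 = 0
    · obtain ⟨i2, hi2⟩ := keyH M hrank ![0, 1, 1] (by decide)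
      rw [Fin.sum_univ_three] at hi2
      simp only [Matrix.cons_val_zero, Matrix.cons_val_one, Matrix.head_cons, mul_one,
        mul_zero, zero_add, Matrix.cons_val_two, Matrix.tail_cons] at hi2
      obtain ⟨hw, hn2, hn3⟩ := decA1 (M i2 0) (M i2 1) (M i2 2) ⟨hwt i2, hi2⟩
      refine key i1 i2 ?_ ?_ ?_ ?_
      · intro he; exact h111 (by rw [← he]; exact ⟨e1, e2, e3⟩)
      · intro he; exact hn2 (by rw [he]; exact h000)
      · intro he; exact hn3 (by rw [← he]; exact ⟨e1, e2, e3⟩)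
      · obtain ⟨z1, z2, z3⟩ := h000
        rw [z1, z2, z3, e1, e2, e3]
        exact hw
    · obtain ⟨i2, hi2⟩ := keyH M hrank (M z) (by
        intro h0
        apply h000
        rw [show M z = 0 from h0]; simp)
      rw [Fin.sum_univ_three] at hi2
      obtain ⟨hw, hn2, hn3⟩ := decA2 (M z 0) (M z 1) (M z 2) (M i2 0) (M i2 1) (M i2 2)
        ⟨hwt z, h111, h000, hwt i2, hi2⟩
      refine key i1 i2 ?_ ?_ ?_ ?_
      · intro he; exact h111 (by rw [← he]; exact ⟨e1, e2, e3⟩)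
      · intro he; exact hn2 (by rw [he]; exact ⟨rfl, rfl, rfl⟩)
      · intro he; exact hn3 (by rw [← he]; exact ⟨e1, e2, e3⟩)
      · rw [e1, e2, e3]
        exact hw

def Cmat (r : ℕ) : Matrix (Fin r) (Fin r) (ZMod 2) :=
  fun i j => if (j : ℕ) = 0 ∧ (i : ℕ) ≠ 0 then 1 else 0

lemma Smat_eq (r : ℕ) : Smat r = 1 + Cmat r := by
  ext i j
  simp only [Smat, Cmat, Matrix.add_apply, Matrix.one_apply]
  have hij : i = j ↔ (i : ℕ) = (j : ℕ) := Fin.ext_iff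
  split_ifs <;> simp_all <;> omega

lemma Cmat_sq (r : ℕ) : Cmat r * Cmat r = 0 := by
  ext i k
  rw [Matrix.mul_apply]
  apply Finset.sum_eq_zero
  intro j _
  simp only [Cmat]
  split_ifs <;> simp_all

lemma Smat_mul_self (r : ℕ) : Smat r * Smat r = 1 := by
  rw [Smat_eq]
  have h2 : Cmat r + Cmat r = 0 := by
    ext i j; simp [CharTwo.add_self_eq_zero]
  calc (1 + Cmat r) * (1 + Cmat r) = 1 + (Cmat r + Cmat r) + Cmat r * Cmat r := by
        noncomm_ring
    _ = 1 := by rw [h2, Cmat_sq]; simp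

lemma Smat_unit (r : ℕ) : IsUnit (Smat r) :=
  ⟨⟨Smat r, Smat r, Smat_mul_self r, Smat_mul_self r⟩, rfl⟩

lemma zmod2_ne_zero_s12 : ∀ x : ZMod 2, x ≠ 0 ↔ x = 1 := by decide

lemma wt_le_of_subset {r : ℕ} (a : Fin r → ZMod 2) (s : Finset (Fin r))
    (hs : ∀ k, a k ≠ 0 → k ∈ s) : wt a ≤ s.card :=
  Finset.card_le_card (fun k hk => hs k (Finset.mem_filter.mp hk).2)

lemma wt_pair_le {r : ℕ} (z i : Fin r) : wt (eVec r z + eVec r i) ≤ 3 := by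
  refine le_trans (wt_le_of_subset _ {z, i} ?_) ?_
  · intro k hk
    by_contra hmem
    simp only [Finset.mem_insert, Finset.mem_singleton, not_or] at hmem
    exact hk (by simp [eVec, Pi.single_apply, hmem.1, hmem.2])
  · refine le_trans (Finset.card_insert_le _ _) ?_
    simp

lemma wt_triple_le {r : ℕ} (z i j : Fin r) : wt (eVec r z + eVec r i + eVec r j) ≤ 3 := by
  refine le_trans (wt_le_of_subset _ {z, i, j} ?_) ?_
  · intro k hk
    by_contra hmem
    simp only [Finset.mem_insert, Finset.mem_singleton, not_or] at hmem
    exact hk (by simp [eVec, Pi.single_apply, hmem.1, hmem.2.1, hmem.2.2])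
  · refine le_trans (Finset.card_insert_le _ _) ?_
    have h2 : ({i, j} : Finset (Fin r)).card ≤ 2 :=
      le_trans (Finset.card_insert_le _ _) (by simp)
    omega

-- decomposition of a ∈ Arm
lemma ind2 (P Q : Prop) [Decidable P] [Decidable Q] (h : ¬(P ∧ Q)) :
    (if P ∨ Q then (1 : ZMod 2) else 0) = (if P then 1 else 0) + (if Q then 1 else 0) := by
  by_cases hP : P <;> by_cases hQ : Q <;> simp [hP, hQ] <;> tauto

lemma ind3 (P Q R : Prop) [Decidable P] [Decidable Q] [Decidable R]
    (hpq : ¬(P ∧ Q)) (hpr : ¬(P ∧ R)) (hqr : ¬(Q ∧ R)) :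
    (if P ∨ Q ∨ R then (1 : ZMod 2) else 0)
      = ((if P then 1 else 0) + (if Q then 1 else 0)) + (if R then 1 else 0) := by
  by_cases hP : P <;> by_cases hQ : Q <;> by_cases hR : R <;> simp [hP, hQ, hR] <;> tauto

lemma decomp {r : ℕ} (h : 0 < r) (a : Fin r → ZMod 2)
    (h0 : a ⟨0, h⟩ = 1) (hw : wt a ≤ 3) :
    a = eVec r ⟨0, h⟩ ∨
    (∃ i : Fin r, i ≠ ⟨0, h⟩ ∧ a = eVec r ⟨0, h⟩ + eVec r i) ∨
    (∃ i j : Fin r, i ≠ ⟨0, h⟩ ∧ j ≠ ⟨0, h⟩ ∧ i ≠ j ∧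
      a = eVec r ⟨0, h⟩ + eVec r i + eVec r j) := by
  set z : Fin r := ⟨0, h⟩ with hzdef
  set s : Finset (Fin r) := Finset.univ.filter (fun j => a j ≠ 0) with hs
  have hzs : z ∈ s := by
    simp only [hs, Finset.mem_filter, Finset.mem_univ, true_and]
    rw [h0]; decide
  have a_eq : ∀ k, a k = if k ∈ s then 1 else 0 := by
    intro k
    by_cases hk : k ∈ s
    · rw [if_pos hk]
      exact (zmod2_ne_zero_s12 _).mp (Finset.mem_filter.mp hk).2
    · rw [if_neg hk]
      by_contra hne
      exact hk (Finset.mem_filter.mpr ⟨Finset.mem_univ _, hne⟩)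
  have hcard : s.card = 1 ∨ s.card = 2 ∨ s.card = 3 := by
    have h1 : 1 ≤ s.card := Finset.card_pos.mpr ⟨z, hzs⟩
    have h3 : s.card ≤ 3 := hw
    omega
  rcases hcard with hc | hc | hc
  · left
    obtain ⟨x, hx⟩ := Finset.card_eq_one.mp hc
    have hzx : z = x := by simpa [hx] using hzs
    funext k
    rw [a_eq k, hx, ← hzx]
    simp [eVec, Pi.single_apply, Finset.mem_singleton]
  · right; left
    obtain ⟨x, y, hxy, hxy2⟩ := Finset.card_eq_two.mp hc
    have hmem : z = x ∨ z = y := by simpa [hxy2] using hzs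
    have main : ∀ w : Fin r, w ≠ z → (∀ k, k ∈ s ↔ k = z ∨ k = w) →
        ∃ i : Fin r, i ≠ z ∧ a = eVec r z + eVec r i := by
      intro w hwz hmemiff
      refine ⟨w, hwz, funext fun k => ?_⟩
      rw [a_eq k]
      simp only [eVec, Pi.add_apply, Pi.single_apply, hmemiff k]
      rw [ind2 (k = z) (k = w) (fun hh => hwz (hh.2.symm.trans hh.1))]
    rcases hmem with hz | hz
    · exact main y (by rw [← hz] at hxy; exact fun he => hxy he.symm)
        (fun k => by subst hz; simp only [hxy2, Finset.mem_insert, Finset.mem_singleton] <;> tauto)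
    · exact main x (by rw [← hz] at hxy; exact fun he => hxy he)
        (fun k => by subst hz; simp only [hxy2, Finset.mem_insert, Finset.mem_singleton] <;> tauto)
  · right; right
    obtain ⟨x, y, w, hxy, hxw, hyw, hs3⟩ := Finset.card_eq_three.mp hc
    have hmem : z = x ∨ z = y ∨ z = w := by simpa [hs3] using hzs
    have main : ∀ u v : Fin r, u ≠ z → v ≠ z → u ≠ v →
        (∀ k, k ∈ s ↔ k = z ∨ k = u ∨ k = v) →
        ∃ i j : Fin r, i ≠ z ∧ j ≠ z ∧ i ≠ j ∧ a = eVec r z + eVec r i + eVec r j := by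
      intro u v hu hv huv hmemiff
      refine ⟨u, v, hu, hv, huv, funext fun k => ?_⟩
      rw [a_eq k]
      simp only [eVec, Pi.add_apply, Pi.single_apply, hmemiff k]
      rw [ind3 (k = z) (k = u) (k = v) (fun hh => hu (hh.2.symm.trans hh.1))
        (fun hh => hv (hh.2.symm.trans hh.1)) (fun hh => huv (hh.1.symm.trans hh.2))]
    rcases hmem with hz | hz | hz
    · exact main y w (fun he => hxy (he.trans hz).symm) (fun he => hxw (he.trans hz).symm)
        hyw (fun k => by subst hz; simp only [hs3, Finset.mem_insert, Finset.mem_singleton] <;> tauto)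
    · exact main x w (fun he => hxy (he.trans hz)) (fun he => hyw (he.trans hz).symm)
        hxw (fun k => by subst hz; simp only [hs3, Finset.mem_insert, Finset.mem_singleton] <;> tauto)
    · exact main x y (fun he => hxw (he.trans hz)) (fun he => hyw (he.trans hz))
        hxy (fun k => by subst hz; simp only [hs3, Finset.mem_insert, Finset.mem_singleton] <;> tauto)

section
variable {r : ℕ}

lemma img1 (h : 0 < r) :
    Matrix.vecMul (eVec r ⟨0, h⟩) (Smat r) = eVec r ⟨0, h⟩ := by
  funext k
  rw [vecMul_Smat]
  by_cases hk : (k : ℕ) = 0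
  · have : k = ⟨0, h⟩ := Fin.ext hk
    rw [if_pos hk, sum_eVec, this, eVec, Pi.single_eq_same]
  · rw [if_neg hk]

lemma img2 (h : 0 < r) (i : Fin r) (hi : i ≠ ⟨0, h⟩) :
    Matrix.vecMul (eVec r ⟨0, h⟩ + eVec r i) (Smat r) = eVec r i := by
  funext k
  rw [vecMul_Smat]
  by_cases hk : (k : ℕ) = 0
  · have hkz : k = ⟨0, h⟩ := Fin.ext hk
    rw [if_pos hk]
    rw [show (∑ x, (eVec r ⟨0, h⟩ + eVec r i) x) = (∑ x, eVec r ⟨0, h⟩ x) + ∑ x, eVec r i x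
      from Finset.sum_add_distrib, sum_eVec, sum_eVec, hkz]
    simp [eVec, Pi.single_apply, Ne.symm hi]
    decide
  · rw [if_neg hk]
    have hkz : k ≠ ⟨0, h⟩ := fun he => hk (by rw [he])
    simp [eVec, Pi.single_apply, hkz]

lemma img3 (h : 0 < r) (i j : Fin r) (hi : i ≠ ⟨0, h⟩) (hj : j ≠ ⟨0, h⟩) :
    Matrix.vecMul (eVec r ⟨0, h⟩ + eVec r i + eVec r j) (Smat r)
      = eVec r ⟨0, h⟩ + eVec r i + eVec r j := by
  funext k
  rw [vecMul_Smat]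
  by_cases hk : (k : ℕ) = 0
  · have hkz : k = ⟨0, h⟩ := Fin.ext hk
    rw [if_pos hk]
    rw [show (∑ x, (eVec r ⟨0, h⟩ + eVec r i + eVec r j) x)
        = ((∑ x, eVec r ⟨0, h⟩ x) + ∑ x, eVec r i x) + ∑ x, eVec r j x by
      rw [← Finset.sum_add_distrib, ← Finset.sum_add_distrib]; rfl,
      sum_eVec, sum_eVec, sum_eVec, hkz]
    simp [eVec, Pi.single_apply, Ne.symm hi, Ne.symm hj, Pi.single_eq_same]
    decide
  · rw [if_neg hk]
end


lemma set_eq {r : ℕ} (h : 0 < r) :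
    Wset r h = (fun a => Matrix.vecMul a (Smat r)) '' Arm r 3 h := by
  apply Set.Subset.antisymm
  · rintro v (⟨i, rfl⟩ | ⟨i, j, hi, hij, rfl⟩)
    · by_cases hiz : i = ⟨0, h⟩
      · refine ⟨eVec r ⟨0, h⟩, ⟨?_, ?_⟩, ?_⟩
        · simp [eVec]
        · rw [wt_eVec]; omega
        · show Matrix.vecMul (eVec r ⟨0, h⟩) (Smat r) = eVec r i
          rw [img1 h, hiz]
      · refine ⟨eVec r ⟨0, h⟩ + eVec r i, ⟨?_, wt_pair_le _ _⟩, img2 h i hiz⟩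
        simp [eVec, Pi.single_apply, Ne.symm hiz]
    · have hiz : i ≠ ⟨0, h⟩ := by
        intro he; rw [he] at hi; simp at hi
      have hjz : j ≠ ⟨0, h⟩ := by
        intro he; rw [he] at hij
        have : (i : ℕ) < 0 := hij
        omega
      refine ⟨eVec r ⟨0, h⟩ + eVec r i + eVec r j, ⟨?_, wt_triple_le _ _ _⟩,
        img3 h i j hiz hjz⟩
      simp [eVec, Pi.single_apply, Ne.symm hiz, Ne.symm hjz]
  · rintro v ⟨a, ⟨h0, hw⟩, rfl⟩
    show Matrix.vecMul a (Smat r) ∈ Wset r h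
    rcases decomp h a h0 hw with h1 | ⟨i, hi, h2⟩ | ⟨i, j, hi, hj, hij, h3⟩
    · rw [h1, img1 h]; exact Or.inl ⟨_, rfl⟩
    · rw [h2, img2 h i hi]; exact Or.inl ⟨i, rfl⟩
    · rw [h3, img3 h i j hi hj]
      have hvi : 0 < (i : ℕ) := by
        rcases Nat.eq_zero_or_pos (i : ℕ) with hp | hp
        · exact absurd (Fin.ext hp : i = ⟨0, h⟩) hi
        · exact hp
      have hvj : 0 < (j : ℕ) := by
        rcases Nat.eq_zero_or_pos (j : ℕ) with hp | hp
        · exact absurd (Fin.ext hp : j = ⟨0, h⟩) hj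
        · exact hp
      rcases lt_or_gt_of_ne hij with hlt | hlt
      · exact Or.inr ⟨i, j, hvi, hlt, rfl⟩
      · exact Or.inr ⟨j, i, hvj, hlt, by rw [add_right_comm]⟩

theorem stmt_12 (r : ℕ) (hr : 3 ≤ r) :
    IsUnit (Smat r) ∧
    Wset r (by omega) = (fun a => Matrix.vecMul a (Smat r)) '' Arm r 3 (by omega) ∧
    GenCor r 3 (Wset r (by omega)) := by
  refine ⟨Smat_unit r, set_eq _, ?_⟩
  intro m' h1 h3
  interval_cases m'
  · exact genred1 _
  · exact genred2 _
  · exact genred3 _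
end

section
/- If A ⊆ F_2^r is a generic (r,r)-erasure correcting set, then the complement F_2^r \ A does not contain r linearly independent vectors; consequently |A| ≥ 2^{r−1}. -/
/-!
If a basis `v` of `F₂^r` avoided `A`, apply erasure reduction to the inverse `N⁻¹` of the matrix
with rows `v`: the element `a ∈ A` with `a N⁻¹ = e_j` is the row `v_j` itself. So the complement
of `A` spans a proper subspace, which has at most `2^(r-1)` elements.
-/

open Matrix

open Module Submodule

theorem exists_eq_single_of_wt_eq_one {n : ℕ} {v : Fin n → ZMod 2} (hv : wt v = 1) :
    ∃ j, v = Pi.single j 1 := by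
  obtain ⟨j, hj⟩ := Finset.card_eq_one.mp hv
  refine ⟨j, funext fun k => ?_⟩
  have hk : v k ≠ 0 ↔ k = j := by simpa using Finset.ext_iff.mp hj k
  by_cases hkj : k = j
  · subst hkj
    simpa using (by decide : ∀ x : ZMod 2, x ≠ 0 → x = 1) _ (hk.mpr rfl)
  · rw [Pi.single_eq_of_ne hkj]
    exact not_not.mp (hk.not.mpr hkj)

theorem GenRed.exists_mem_of_linearIndependent {r : ℕ} {A : Set (Fin r → ZMod 2)}
    (hA : GenRed r r A) {v : Fin r → Fin r → ZMod 2} (hv : LinearIndependent (ZMod 2) v) :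
    ∃ i, v i ∈ A := by
  set N : Matrix (Fin r) (Fin r) (ZMod 2) := Matrix.of v
  have hdet : IsUnit N.det :=
    (isUnit_iff_isUnit_det N).mp (linearIndependent_rows_iff_isUnit.mp hv)
  have hinv : IsUnit N⁻¹ := (isUnit_iff_isUnit_det _).mpr (isUnit_nonsing_inv_det N hdet)
  have hrank : N⁻¹.rank = r := by rw [rank_of_isUnit _ hinv, Fintype.card_fin]
  obtain ⟨a, haA, hw⟩ := hA N⁻¹ hrank
  obtain ⟨j, hj⟩ := exists_eq_single_of_wt_eq_one hw
  refine ⟨j, ?_⟩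
  have ha : a = vecMul (Pi.single j 1) N := by
    rw [← hj, vecMul_vecMul, nonsing_inv_mul N hdet, vecMul_one]
  rw [ha, single_one_vecMul] at haA
  exact haA

theorem exists_linearIndependent_fin_of_span_eq_top {K V : Type*} [DivisionRing K]
    [AddCommGroup V] [Module K V] [FiniteDimensional K V] {n : ℕ} (hn : finrank K V = n)
    {S : Set V} (hS : span K S = ⊤) :
    ∃ v : Fin n → V, LinearIndependent K v ∧ ∀ i, v i ∈ S := by
  obtain ⟨b, hbS, hbspan, hb⟩ := exists_linearIndependent K S
  let B := Basis.mk hb (by rw [Subtype.range_coe, hbspan, hS])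
  let e := B.indexEquiv (finBasisOfFinrankEq K V hn)
  exact ⟨fun i => e.symm i, hb.comp _ e.symm.injective, fun i => hbS (e.symm i).2⟩

theorem Submodule.ncard_le_of_ne_top {K V : Type*} [Field K] [Fintype K] [AddCommGroup V]
    [Module K V] [FiniteDimensional K V] {W : Submodule K V} (hW : W ≠ ⊤) :
    (W : Set V).ncard ≤ Fintype.card K ^ (finrank K V - 1) := by
  have : Finite V := Module.finite_of_finite K
  have : Fintype W := Fintype.ofFinite W
  rw [← Nat.card_coe_set_eq, SetLike.coe_sort_coe, Nat.card_eq_fintype_card,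
    Module.card_eq_pow_finrank (K := K)]
  exact Nat.pow_le_pow_right Fintype.card_pos (by have := finrank_lt hW; omega)

theorem stmt_14 (r : ℕ) (hr : 1 ≤ r) (A : Set (Fin r → ZMod 2))
    (hA : GenCor r r A) :
    (¬ ∃ v : Fin r → (Fin r → ZMod 2),
        LinearIndependent (ZMod 2) v ∧ ∀ i, v i ∉ A) ∧
    2 ^ (r - 1) ≤ A.ncard := by
  have hrank : finrank (ZMod 2) (Fin r → ZMod 2) = r := finrank_fin_fun _
  have hbasis : ¬ ∃ v : Fin r → (Fin r → ZMod 2),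
      LinearIndependent (ZMod 2) v ∧ ∀ i, v i ∉ A := fun ⟨_, hv, hvA⟩ =>
    let ⟨i, hi⟩ := (hA r hr le_rfl).exists_mem_of_linearIndependent hv
    hvA i hi
  refine ⟨hbasis, ?_⟩
  have hspan : span (ZMod 2) Aᶜ ≠ ⊤ := fun htop =>
    hbasis (exists_linearIndependent_fin_of_span_eq_top hrank htop)
  have hcompl : Aᶜ.ncard ≤ 2 ^ (r - 1) := by
    simpa [hrank] using (Set.ncard_le_ncard subset_span).trans (ncard_le_of_ne_top hspan)
  have htotal : A.ncard + Aᶜ.ncard = 2 ^ r := by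
    rw [Set.ncard_add_ncard_compl, Nat.card_eq_fintype_card, Fintype.card_fun, ZMod.card,
      Fintype.card_fin]
  have hhalf : 2 ^ r = 2 ^ (r - 1) + 2 ^ (r - 1) := by
    rw [← two_mul, ← pow_succ', Nat.sub_add_cancel hr]
  omega
end

section
/- Let r ≥ m ≥ 3 and let a ∈ A_{r,m} = {x ∈ F_2^r : x_1 = 1, wt(x) ≤ m} have weight m or m−1. Then A_{r,m} \ {a} is not a generic (r,m)-erasure correcting set; specifically, there exists an r×m binary matrix M of rank m such that a is the unique vector x ∈ A_{r,m} with wt(xM) = 1. -/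
open Matrix

lemma zmod2_eq_one {v : ZMod 2} (h : v ≠ 0) : v = 1 := by revert h; revert v; decide

lemma sum_eq_wt {n : ℕ} (v : Fin n → ZMod 2) : ∑ i, v i = (wt v : ZMod 2) := by
  rw [wt, ← Finset.sum_filter_ne_zero Finset.univ]
  rw [Finset.sum_congr rfl (fun i hi => zmod2_eq_one (Finset.mem_filter.mp hi).2)]
  simp

lemma dot_single {n : ℕ} (x : Fin n → ZMod 2) (j : Fin n) :
    (∑ i, x i * (if i = j then 1 else 0)) = x j := by
  simp [mul_ite]

lemma key_s16 {m r : ℕ} (hm : 3 ≤ m) (hr : m ≤ r)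
    (a : Fin r → ZMod 2) (ha0 : a ⟨0, by omega⟩ = 1)
    (hwt : wt a = m ∨ wt a = m - 1) :
    ∃ M : Matrix (Fin r) (Fin m) (ZMod 2), M.rank = m ∧
      ∀ x : Fin r → ZMod 2, x ⟨0, by omega⟩ = 1 → wt x ≤ m →
        (wt (Matrix.vecMul x M) = 1 ↔ x = a) := by
  set z : Fin r := ⟨0, by omega⟩ with hz
  set S : Finset (Fin r) := Finset.univ.filter (fun i => a i ≠ 0) with hSdef
  have hcard : S.card = wt a := rfl
  have h0S : z ∈ S := by
    rw [hSdef]; simp only [Finset.mem_filter, Finset.mem_univ, true_and, ha0]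
    exact one_ne_zero
  have hwm : S.card ≤ m := by rw [hcard]; omega
  have hwpos : 0 < S.card := by rw [hcard]; omega
  have hw2 : 2 ≤ S.card := by rw [hcard]; omega
  set σ := S.orderEmbOfFin rfl with hσ
  have hσ0 : σ ⟨0, hwpos⟩ = z := by
    have h1 : σ ⟨0, hwpos⟩ = S.min' ⟨z, h0S⟩ := Finset.orderEmbOfFin_zero rfl hwpos
    have h2 : S.min' ⟨z, h0S⟩ ≤ z := Finset.min'_le S z h0S
    have h3 : z ≤ S.min' ⟨z, h0S⟩ := by
      rw [Fin.le_def]; simp [hz]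
    rw [h1]; exact le_antisymm h2 h3
  set s : Fin m → Fin r := fun k => if h : (k : ℕ) < S.card then σ ⟨k, h⟩ else z with hs
  have hsmem : ∀ (k : Fin m), (k : ℕ) < S.card → s k ∈ S := by
    intro k h; rw [hs]; simp only [dif_pos h]; exact Finset.orderEmbOfFin_mem S rfl _
  have hsa : ∀ (k : Fin m), (k : ℕ) < S.card → a (s k) = 1 := by
    intro k h
    have := hsmem k h
    rw [hSdef, Finset.mem_filter] at this
    exact zmod2_eq_one this.2
  have hsne : ∀ (k : Fin m), 0 < (k : ℕ) → (k : ℕ) < S.card → s k ≠ z := by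
    intro k hk0 hkc
    rw [hs]; simp only [dif_pos hkc]
    have : σ ⟨0, hwpos⟩ < σ ⟨(k : ℕ), hkc⟩ := by
      apply σ.strictMono; exact Fin.mk_lt_mk.mpr hk0
    rw [hσ0] at this
    exact (ne_of_gt this)
  have hsinj : ∀ (k k' : Fin m), (k : ℕ) < S.card → (k' : ℕ) < S.card → s k = s k' → k = k' := by
    intro k k' h h' heq
    rw [hs] at heq; simp only [dif_pos h, dif_pos h'] at heq
    have := σ.injective heq
    exact Fin.ext (congrArg Fin.val this : ((⟨(k:ℕ), h⟩ : Fin S.card) : ℕ) = _)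
  -- the matrix
  set M : Matrix (Fin r) (Fin m) (ZMod 2) := fun i k =>
    if (k : ℕ) = 0 then (if i = z then 1 else 0)
    else if (k : ℕ) < S.card then (if i = z then 1 else 0) + (if i = s k then 1 else 0)
    else 1 + a i with hM
  -- value of the syndrome
  have hvm : ∀ (x : Fin r → ZMod 2) (k : Fin m), Matrix.vecMul x M k =
      if (k : ℕ) = 0 then x z
      else if (k : ℕ) < S.card then x z + x (s k)
      else (wt x : ZMod 2) + (wt (fun i => x i * a i) : ZMod 2) := by
    intro x k
    rw [Matrix.vecMul, dotProduct]
    simp only [hM]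
    split_ifs with h1 h2
    · exact dot_single x z
    · rw [show (∑ i, x i * ((if i = z then 1 else 0) + (if i = s k then 1 else 0)))
          = (∑ i, x i * (if i = z then 1 else 0)) + (∑ i, x i * (if i = s k then 1 else 0)) by
        rw [← Finset.sum_add_distrib]; exact Finset.sum_congr rfl fun i _ => mul_add _ _ _]
      rw [dot_single, dot_single]
    · rw [show (∑ i, x i * (1 + a i)) = (∑ i, x i) + (∑ i, x i * a i) by
        rw [← Finset.sum_add_distrib]; exact Finset.sum_congr rfl fun i _ => by ring]
      rw [sum_eq_wt, sum_eq_wt]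
  -- rank
  have hrank : M.rank = m := by
    have hinj : Function.Injective M.mulVecLin := by
      rw [injective_iff_map_eq_zero]
      intro v hv
      have hv' : ∀ i : Fin r, (∑ k, M i k * v k) = 0 := by
        intro i
        have h := congrFun hv i
        rwa [Matrix.mulVecLin_apply, Matrix.mulVec, dotProduct, Pi.zero_apply] at h
      have hmid : ∀ k : Fin m, 0 < (k : ℕ) → (k : ℕ) < S.card → v k = 0 := by
        intro k hk0 hkc
        have h := hv' (s k)
        rw [Finset.sum_eq_single k ?_ (fun h => absurd (Finset.mem_univ k) h)] at h
        · simpa [hM, hkc, (show ¬((k:ℕ) = 0) by omega), hsne k hk0 hkc] using h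
        · intro k' _ hne
          simp only [hM]
          by_cases hk'0 : (k' : ℕ) = 0
          · rw [if_pos hk'0, if_neg (hsne k hk0 hkc), zero_mul]
          · rw [if_neg hk'0]
            by_cases hk'c : (k' : ℕ) < S.card
            · rw [if_pos hk'c, if_neg (hsne k hk0 hkc),
                if_neg (fun he => hne (hsinj k' k hk'c hkc he.symm)), add_zero, zero_mul]
            · rw [if_neg hk'c, hsa k hkc, show (1:ZMod 2) + 1 = 0 by decide, zero_mul]
      have hlast : ∀ k : Fin m, ¬ ((k : ℕ) < S.card) → v k = 0 := by
        intro k hkc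
        have hcm : S.card = m - 1 := by
          rcases hwt with h' | h'
          · exfalso; rw [hcard, h'] at hkc; exact hkc k.2
          · rw [hcard, h']
        obtain ⟨t, ht⟩ : ∃ t, t ∉ S := by
          by_contra hc
          push_neg at hc
          have h1 : (Finset.univ : Finset (Fin r)).card ≤ S.card :=
            Finset.card_le_card (fun t _ => hc t)
          rw [Finset.card_univ, Fintype.card_fin] at h1
          omega
        have hta : a t = 0 := by
          by_contra hta
          exact ht (by rw [hSdef]; exact Finset.mem_filter.mpr ⟨Finset.mem_univ _, hta⟩)
        have htz : t ≠ z := fun he => ht (he ▸ h0S)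
        have h := hv' t
        rw [Finset.sum_eq_single k ?_ (fun h => absurd (Finset.mem_univ k) h)] at h
        · simpa [hM, hkc, (show ¬((k:ℕ) = 0) by omega), hta] using h
        · intro k' _ hne
          simp only [hM]
          by_cases hk'0 : (k' : ℕ) = 0
          · rw [if_pos hk'0, if_neg htz, zero_mul]
          · rw [if_neg hk'0]
            by_cases hk'c : (k' : ℕ) < S.card
            · rw [if_pos hk'c, if_neg htz,
                if_neg (fun he : t = s k' => ht (he ▸ hsmem k' hk'c)), add_zero, zero_mul]
            · exfalso
              have := k.2; have := k'.2
              apply hne; apply Fin.ext; omega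
      have hzero : v ⟨0, by omega⟩ = 0 := by
        have h := hv' z
        rw [Finset.sum_eq_single (⟨0, by omega⟩ : Fin m) ?_
          (fun h => absurd (Finset.mem_univ _) h)] at h
        · simpa [hM] using h
        · intro k' _ hne
          simp only [hM]
          have hk'0 : ¬ ((k' : ℕ) = 0) := fun he => hne (Fin.ext he)
          rw [if_neg hk'0]
          by_cases hk'c : (k' : ℕ) < S.card
          · rw [if_pos hk'c, hmid k' (by omega) hk'c, mul_zero]
          · rw [if_neg hk'c, ha0, show (1:ZMod 2) + 1 = 0 by decide, zero_mul]
      funext k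
      by_cases hk0 : (k : ℕ) = 0
      · rw [show k = ⟨0, by omega⟩ from Fin.ext hk0]; exact hzero
      · by_cases hkc : (k : ℕ) < S.card
        · exact hmid k (by omega) hkc
        · exact hlast k hkc
    rw [Matrix.rank, LinearMap.finrank_range_of_inj hinj, Module.finrank_fin_fun]
  refine ⟨M, hrank, fun x hx0 hxw => ⟨fun h1 => ?_, fun h1 => ?_⟩⟩
  · -- forward direction
    have hmem0 : (⟨0, by omega⟩ : Fin m) ∈
        Finset.univ.filter (fun k => Matrix.vecMul x M k ≠ 0) := by
      refine Finset.mem_filter.mpr ⟨Finset.mem_univ _, ?_⟩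
      rw [hvm x ⟨0, by omega⟩, if_pos rfl, hx0]
      exact one_ne_zero
    have hfilter : Finset.univ.filter (fun k => Matrix.vecMul x M k ≠ 0)
        = {(⟨0, by omega⟩ : Fin m)} := by
      rw [wt] at h1
      obtain ⟨b, hb⟩ := Finset.card_eq_one.mp h1
      rw [hb] at hmem0 ⊢
      rw [Finset.mem_singleton] at hmem0
      rw [hmem0]
    have hall : ∀ k : Fin m, (k : ℕ) ≠ 0 → Matrix.vecMul x M k = 0 := by
      intro k hk
      by_contra hne
      have hmem : k ∈ Finset.univ.filter (fun k => Matrix.vecMul x M k ≠ 0) :=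
        Finset.mem_filter.mpr ⟨Finset.mem_univ _, hne⟩
      rw [hfilter, Finset.mem_singleton] at hmem
      exact hk (congrArg Fin.val hmem)
    have hSX : ∀ i ∈ S, x i ≠ 0 := by
      intro i hi
      have hiR : i ∈ Set.range σ := by
        rw [hσ, Finset.range_orderEmbOfFin]
        exact hi
      obtain ⟨k', hk'⟩ := hiR
      by_cases hk0 : (k' : ℕ) = 0
      · have : k' = ⟨0, hwpos⟩ := Fin.ext hk0
        rw [this, hσ0] at hk'
        rw [← hk', hx0]
        exact one_ne_zero
      · have hkm : (k' : ℕ) < m := lt_of_lt_of_le k'.2 hwm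
        have h0 := hall ⟨(k' : ℕ), hkm⟩ hk0
        rw [hvm, if_neg hk0, if_pos k'.2] at h0
        have hskk : s ⟨(k' : ℕ), hkm⟩ = i := by
          rw [hs]; simp only [dif_pos k'.2]
          rw [← hk']
        rw [hskk, hx0] at h0
        intro hxi
        rw [hxi, add_zero] at h0
        exact one_ne_zero h0
    have hsub : S ⊆ Finset.univ.filter (fun i => x i ≠ 0) :=
      fun i hi => Finset.mem_filter.mpr ⟨Finset.mem_univ _, hSX i hi⟩
    have hXcard : (Finset.univ.filter (fun i => x i ≠ 0)).card = wt x := rfl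
    have hXeq : S = Finset.univ.filter (fun i => x i ≠ 0) := by
      apply Finset.eq_of_subset_of_card_le hsub
      rw [hXcard, hcard]
      rcases hwt with hcm | hcm
      · omega
      · -- parity case
        have hmlt : m - 1 < m := by omega
        have hk1 : ((⟨m - 1, hmlt⟩ : Fin m) : ℕ) ≠ 0 := by
          show m - 1 ≠ 0; omega
        have hk1c : ¬ (((⟨m - 1, hmlt⟩ : Fin m) : ℕ) < S.card) := by
          show ¬ (m - 1 < S.card)
          rw [hcard, hcm]
          omega
        have h0 := hall ⟨m - 1, hmlt⟩ hk1
        rw [hvm, if_neg hk1, if_neg hk1c] at h0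
        have hxa : Finset.univ.filter (fun i => x i * a i ≠ 0) = S := by
          ext i
          simp only [Finset.mem_filter, Finset.mem_univ, true_and, mul_ne_zero_iff]
          constructor
          · rintro ⟨hxi, hai⟩
            rw [hSdef]
            exact Finset.mem_filter.mpr ⟨Finset.mem_univ _, hai⟩
          · intro hi
            refine ⟨hSX i hi, ?_⟩
            rw [hSdef, Finset.mem_filter] at hi
            exact hi.2
        have hwxa : wt (fun i => x i * a i) = S.card := by rw [wt, hxa]
        rw [hwxa] at h0
        have hpar : (wt x : ZMod 2) = (S.card : ZMod 2) := by
          have := CharTwo.neg_eq (R := ZMod 2) (S.card : ZMod 2)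
          have h2 : (wt x : ZMod 2) = -(S.card : ZMod 2) := eq_neg_of_add_eq_zero_left h0
          rw [h2, this]
        rw [ZMod.natCast_eq_natCast_iff'] at hpar
        have hle : S.card ≤ wt x := by
          rw [← hXcard]; exact Finset.card_le_card hsub
        rw [hcard, hcm] at hle
        omega
    funext i
    by_cases hi : i ∈ S
    · have hai : a i = 1 := by
        rw [hSdef, Finset.mem_filter] at hi
        exact zmod2_eq_one hi.2
      rw [hai, zmod2_eq_one (hSX i hi)]
    · have hxi : x i = 0 := by
        by_contra hc
        exact hi (hXeq ▸ Finset.mem_filter.mpr ⟨Finset.mem_univ _, hc⟩)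
      have hai : a i = 0 := by
        by_contra hc
        exact hi (by rw [hSdef]; exact Finset.mem_filter.mpr ⟨Finset.mem_univ _, hc⟩)
      rw [hxi, hai]
  · -- backward direction
    rw [h1, wt, show Finset.univ.filter (fun k => Matrix.vecMul a M k ≠ 0)
        = {(⟨0, by omega⟩ : Fin m)} from ?_, Finset.card_singleton]
    ext k
    simp only [Finset.mem_filter, Finset.mem_univ, true_and, Finset.mem_singleton]
    rw [hvm]
    by_cases hk0 : (k : ℕ) = 0
    · rw [if_pos hk0, ha0]
      simp only [ne_eq, one_ne_zero, not_false_iff, true_iff]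
      exact Fin.ext hk0
    · rw [if_neg hk0]
      by_cases hkc : (k : ℕ) < S.card
      · rw [if_pos hkc, ha0, hsa k hkc, show (1 : ZMod 2) + 1 = 0 by decide]
        constructor
        · intro he; exact absurd rfl he
        · intro he; exact absurd (congrArg Fin.val he) hk0
      · rw [if_neg hkc]
        have hxx : (fun i => a i * a i) = a := by
          funext i
          have hvv : ∀ v : ZMod 2, v * v = v := by decide
          exact hvv (a i)
        rw [hxx, show ((wt a : ZMod 2) + (wt a : ZMod 2)) = 0 from
          CharTwo.add_self_eq_zero _]
        constructor
        · intro he; exact absurd rfl he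
        · intro he; exact absurd (congrArg Fin.val he) hk0

theorem stmt_16 (r m : ℕ) (hm : 3 ≤ m) (hr : m ≤ r)
    (a : Fin r → ZMod 2) (ha : a ∈ Arm r m (by omega))
    (hwt : wt a = m ∨ wt a = m - 1) :
    ¬ GenCor r m (Arm r m (by omega) \ {a}) ∧
    ∃ M : Matrix (Fin r) (Fin m) (ZMod 2), M.rank = m ∧
      ∀ x ∈ Arm r m (show 0 < r by omega), wt (Matrix.vecMul x M) = 1 ↔ x = a := by
  obtain ⟨ha0, hwa⟩ := ha
  obtain ⟨M, hrank, hM⟩ := key_s16 hm hr a ha0 hwt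
  refine ⟨?_, M, hrank, fun x hx => hM x hx.1 hx.2⟩
  intro hgc
  obtain ⟨b, hb, hb1⟩ := hgc m (by omega) le_rfl M hrank
  exact hb.2 ((hM b hb.1.1 hb.1.2).mp hb1)
end

section
/- Let m ≥ 3 and r = m+1. For every a ∈ A_{r,m} = {x ∈ F_2^{m+1} : x_1 = 1, wt(x) ≤ m}, the set A_{r,m} \ {a} is not generic (m+1,m)-erasure correcting; hence no proper subset of A_{m+1,m} is generic (m+1,m)-erasure correcting. -/
open Matrix

open Module
variable {m : ℕ}

def Mx (m : ℕ) [NeZero m] (a : Fin (m+1) → ZMod 2) (t : Fin (m+1)) :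
    Matrix (Fin (m+1)) (Fin m) (ZMod 2) := fun j i =>
  if i = 0 then (if j = 0 then 1 else 0)
  else (if j = t.succAbove i then 1 else 0) +
       (if a (t.succAbove i) = 1 then (if j = 0 then 1 else 0) else (if j = t then 1 else 0))

lemma succAbove_zero' (t : Fin (m+1)) (ht0 : t ≠ 0) [NeZero m] : t.succAbove 0 = 0 := by
  rw [Fin.succAbove_of_castSucc_lt]
  · simp
  · simpa [Fin.pos_iff_ne_zero] using ht0

lemma succAbove_ne_zero' (t : Fin (m+1)) (ht0 : t ≠ 0) [NeZero m] (i : Fin m) (hi : i ≠ 0) :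
    t.succAbove i ≠ 0 := by
  intro h
  exact hi (Fin.succAbove_right_injective (h.trans (succAbove_zero' t ht0).symm))

lemma vecMul_Mx_zero [NeZero m] (a : Fin (m+1) → ZMod 2) (t : Fin (m+1))
    (x : Fin (m+1) → ZMod 2) : vecMul x (Mx m a t) 0 = x 0 := by
  simp [Matrix.vecMul, dotProduct, Mx]

lemma vecMul_Mx_ne [NeZero m] (a : Fin (m+1) → ZMod 2) (t : Fin (m+1))
    (x : Fin (m+1) → ZMod 2) (i : Fin m) (hi : i ≠ 0) :
    vecMul x (Mx m a t) i
      = x (t.succAbove i) + (if a (t.succAbove i) = 1 then x 0 else x t) := by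
  by_cases ha : a (t.succAbove i) = 1 <;>
    simp [Matrix.vecMul, dotProduct, Mx, hi, ha, mul_add, Finset.sum_add_distrib]

lemma Mx_rank [NeZero m] (a : Fin (m+1) → ZMod 2) (t : Fin (m+1)) (ht0 : t ≠ 0) :
    (Mx m a t).rank = m := by
  have hinj : Function.Injective (Mx m a t).mulVecLin := by
    rw [← LinearMap.ker_eq_bot, LinearMap.ker_eq_bot']
    intro v hv
    have hv' : ∀ j, (Mx m a t).mulVec v j = 0 := fun j => congrFun hv j
    have hne : ∀ i : Fin m, i ≠ 0 → v i = 0 := by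
      intro i₀ hi₀
      have hrow : ∀ i, Mx m a t (t.succAbove i₀) i = if i = i₀ then 1 else 0 := by
        intro i
        by_cases hi : i = 0
        · subst hi
          simp [Mx, succAbove_ne_zero' t ht0 i₀ hi₀, Ne.symm hi₀]
        · simp only [Mx, if_neg hi]
          rw [if_neg (succAbove_ne_zero' t ht0 i₀ hi₀), if_neg (Fin.succAbove_ne t i₀)]
          by_cases hii : i = i₀
          · subst hii; simp
          · have : t.succAbove i₀ ≠ t.succAbove i :=
              fun h => hii (Fin.succAbove_right_injective h).symm
            by_cases ha : a (t.succAbove i) = 1 <;> simp [this, hii, ha]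
      have := hv' (t.succAbove i₀)
      rw [Matrix.mulVec, dotProduct] at this
      simp only [hrow] at this
      simpa using this
    have h0 : v 0 = 0 := by
      have := hv' 0
      rw [Matrix.mulVec, dotProduct] at this
      rw [Finset.sum_eq_single (0 : Fin m)] at this
      · simpa [Mx] using this
      · intro i _ hi; simp [hne i hi]
      · simp
    funext i
    by_cases hi : i = 0
    · subst hi; exact h0
    · exact hne i hi
  rw [Matrix.rank, LinearMap.finrank_range_of_inj hinj, Module.finrank_pi, Fintype.card_fin]

lemma zmod2_cases (z : ZMod 2) : z = 0 ∨ z = 1 := by revert z; decide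

lemma zmod2_add_eq_zero (u v : ZMod 2) : u + v = 0 ↔ u = v := by revert u v; decide

lemma Mx_key [NeZero m] (a : Fin (m+1) → ZMod 2) (t : Fin (m+1)) (ht0 : t ≠ 0)
    (ha0 : a 0 = 1) (hat : a t = 0)
    (x : Fin (m+1) → ZMod 2) (hx0 : x 0 = 1) (hxw : wt x ≤ m) (hxa : x ≠ a) :
    wt (vecMul x (Mx m a t)) ≠ 1 := by
  intro h1
  -- all nonzero-first-coordinate: coordinate 0 of the product is 1
  have hv0 : vecMul x (Mx m a t) 0 = 1 := by rw [vecMul_Mx_zero, hx0]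
  have hzero : ∀ i : Fin m, i ≠ 0 → vecMul x (Mx m a t) i = 0 := by
    intro i hi
    by_contra hne
    have h0mem : (0 : Fin m) ∈ Finset.univ.filter (fun j => vecMul x (Mx m a t) j ≠ 0) := by
      simp [hv0]
    have himem : i ∈ Finset.univ.filter (fun j => vecMul x (Mx m a t) j ≠ 0) := by
      simp [hne]
    have : 2 ≤ (Finset.univ.filter (fun j => vecMul x (Mx m a t) j ≠ 0)).card := by
      have : ({0, i} : Finset (Fin m)) ⊆ Finset.univ.filter (fun j => vecMul x (Mx m a t) j ≠ 0) := by
        intro j hj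
        rcases Finset.mem_insert.mp hj with rfl | hj
        · exact h0mem
        · rwa [Finset.mem_singleton.mp hj]
      calc 2 = ({0, i} : Finset (Fin m)).card := by
              rw [Finset.card_insert_of_notMem (by simpa using (Ne.symm hi)), Finset.card_singleton]
        _ ≤ _ := Finset.card_le_card this
    rw [wt] at h1; omega
  have hcond : ∀ i : Fin m, i ≠ 0 →
      x (t.succAbove i) = (if a (t.succAbove i) = 1 then x 0 else x t) := by
    intro i hi
    have := hzero i hi
    rw [vecMul_Mx_ne a t x i hi, zmod2_add_eq_zero] at this
    exact this
  have hcond' : ∀ j : Fin (m+1), j ≠ 0 → j ≠ t →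
      x j = (if a j = 1 then x 0 else x t) := by
    intro j hj0 hjt
    obtain ⟨i, hi⟩ := Fin.exists_succAbove_eq (Ne.symm hjt).symm
    have hi0 : i ≠ 0 := by
      rintro rfl
      rw [succAbove_zero' t ht0] at hi
      exact hj0 hi.symm
    rw [← hi]; exact hcond i hi0
  by_cases hxt : x t = 0
  · apply hxa
    funext j
    by_cases hj0 : j = 0
    · subst hj0; rw [hx0, ha0]
    by_cases hjt : j = t
    · subst hjt; rw [hxt, hat]
    rw [hcond' j hj0 hjt, hx0]
    rcases zmod2_cases (a j) with h | h <;> simp [h, hxt]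
  · have hxt1 : x t = 1 := (zmod2_cases (x t)).resolve_left hxt
    have hall : ∀ j, x j = 1 := by
      intro j
      by_cases hj0 : j = 0
      · subst hj0; exact hx0
      by_cases hjt : j = t
      · subst hjt; exact hxt1
      rw [hcond' j hj0 hjt, hx0, hxt1, ite_self]
    have : wt x = m + 1 := by
      rw [wt, Finset.filter_true_of_mem (fun j _ => by simp [hall j]), Finset.card_univ,
        Fintype.card_fin]
    omega


theorem stmt_17 (m : ℕ) (hm : 3 ≤ m) :
    (∀ a ∈ Arm (m + 1) m (by omega),
      ¬ GenCor (m + 1) m (Arm (m + 1) m (by omega) \ {a})) ∧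
    (∀ B : Set (Fin (m + 1) → ZMod 2), B ⊂ Arm (m + 1) m (by omega) →
      ¬ GenCor (m + 1) m B) := by
  haveI : NeZero m := ⟨by omega⟩
  have hzero : (⟨0, by omega⟩ : Fin (m+1)) = 0 := rfl
  have part1 : ∀ a ∈ Arm (m + 1) m (by omega),
      ¬ GenCor (m + 1) m (Arm (m + 1) m (by omega) \ {a}) := by
    intro a ha hgc
    obtain ⟨ha0', haw⟩ := ha
    have ha0 : a 0 = 1 := by rw [← hzero]; exact ha0'
    have ht : ∃ t, a t = 0 := by
      by_contra h
      push_neg at h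
      have hone : ∀ t, a t = 1 := fun t => (zmod2_cases (a t)).resolve_left (h t)
      have : wt a = m + 1 := by
        rw [wt, Finset.filter_true_of_mem (fun j _ => by simp [hone j]), Finset.card_univ,
          Fintype.card_fin]
      omega
    obtain ⟨t, hat⟩ := ht
    have ht0 : t ≠ 0 := by rintro rfl; rw [ha0] at hat; exact one_ne_zero hat
    obtain ⟨x, hx, hx1⟩ := hgc m (by omega) le_rfl (Mx m a t) (Mx_rank a t ht0)
    obtain ⟨⟨hx0', hxw⟩, hxa⟩ := hx
    have hx0 : x 0 = 1 := by rw [← hzero]; exact hx0'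
    exact Mx_key a t ht0 ha0 hat x hx0 hxw (by simpa using hxa) hx1
  refine ⟨part1, ?_⟩
  intro B hB hgc
  obtain ⟨a, haA, haB⟩ := Set.exists_of_ssubset hB
  apply part1 a haA
  intro m' h1 h2 M hM
  obtain ⟨y, hyB, hy⟩ := hgc m' h1 h2 M hM
  exact ⟨y, ⟨hB.subset hyB, by rintro rfl; exact haB hyB⟩, hy⟩
end
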